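/- arXiv:1710.10497 — 5 statements merged into one kernel-verified Lean document; each statement's English description precedes it below -/
import Mathlib

section
/- Let P : (0,∞) → ℝ be continuously differentiable with (5/3)·P(Z) − Z·P′(Z) > 0 for every Z > 0 and P(Z)/Z^{5/3} → p_∞ > 0 as Z → ∞, and let a > 0. Then the total internal energy e(ρ,θ) = (3/2)·θ^{5/2}·P(ρ·θ^{−3/2})/ρ + a·θ⁴/ρ satisfies the coercivity estimate ρ·e(ρ,θ) > (3/2)·p_∞·ρ^{5/3} + a·θ⁴ for all ρ, θ > 0. -/
open Filter

/-- **Coercivity of the total internal energy.**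
Under the structural assumptions on `P` (positivity of `(5/3)·P Z - Z·P' Z` and the limit
`P Z / Z^{5/3} → p∞ > 0`), the total internal energy
`e(ρ,θ) = (3/2)·θ^{5/2}·P(ρ·θ^{-3/2})/ρ + a·θ⁴/ρ` satisfies
`ρ·e(ρ,θ) > (3/2)·p∞·ρ^{5/3} + a·θ⁴` for all `ρ, θ > 0`. -/
theorem stmt_5 (P P' : ℝ → ℝ) (pinf a : ℝ) (hpinf : 0 < pinf) (ha : 0 < a)
    (hP : ∀ Z ∈ Set.Ioi (0:ℝ), HasDerivAt P (P' Z) Z)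
    (hP'cont : ContinuousOn P' (Set.Ioi 0))
    (hpos : ∀ Z : ℝ, 0 < Z → 0 < (5/3) * P Z - Z * P' Z)
    (hlim : Tendsto (fun Z : ℝ => P Z / Z ^ ((5:ℝ)/3)) atTop (nhds pinf)) :
    ∀ ρ θ : ℝ, 0 < ρ → 0 < θ →
      (3/2) * pinf * ρ ^ ((5:ℝ)/3) + a * θ ^ 4
        < ρ * ((3/2) * θ ^ ((5:ℝ)/2) * P (ρ * θ ^ (-(3:ℝ)/2)) / ρ + a * θ ^ 4 / ρ) := by
  set g : ℝ → ℝ := fun Z => P Z / Z ^ ((5:ℝ)/3) with hgdef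
  have hderiv : ∀ Z ∈ Set.Ioi (0:ℝ), HasDerivAt g
      ((P' Z * Z ^ ((5:ℝ)/3) - P Z * ((5/3) * Z ^ ((5:ℝ)/3 - 1))) / (Z ^ ((5:ℝ)/3))^2) Z := by
    intro Z hZ
    have hZ0 : (0:ℝ) < Z := hZ
    exact (hP Z hZ).div (Real.hasDerivAt_rpow_const (Or.inl (ne_of_gt hZ0)))
      (by positivity)
  have hneg : ∀ Z ∈ Set.Ioi (0:ℝ),
      (P' Z * Z ^ ((5:ℝ)/3) - P Z * ((5/3) * Z ^ ((5:ℝ)/3 - 1))) / (Z ^ ((5:ℝ)/3))^2 < 0 := by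
    intro Z hZ
    have hZ0 : (0:ℝ) < Z := hZ
    apply div_neg_of_neg_of_pos _ (by positivity)
    have h1 : Z ^ ((5:ℝ)/3 - 1) * Z = Z ^ ((5:ℝ)/3) := by
      rw [← Real.rpow_add_one (ne_of_gt hZ0)]; norm_num
    rw [← h1]
    have h2 : P' Z * (Z ^ ((5:ℝ)/3 - 1) * Z) - P Z * (5/3 * Z ^ ((5:ℝ)/3 - 1))
        = -(Z ^ ((5:ℝ)/3 - 1) * ((5/3) * P Z - Z * P' Z)) := by ring
    rw [h2]
    have := hpos Z hZ0
    have hp : (0:ℝ) < Z ^ ((5:ℝ)/3 - 1) := Real.rpow_pos_of_pos hZ0 _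
    nlinarith
  have hanti : StrictAntiOn g (Set.Ioi 0) := by
    apply strictAntiOn_of_deriv_neg (convex_Ioi 0)
    · exact fun Z hZ => (hderiv Z hZ).continuousAt.continuousWithinAt
    · intro Z hZ
      rw [interior_Ioi] at hZ
      rw [(hderiv Z hZ).deriv]
      exact hneg Z hZ
  have key : ∀ Z : ℝ, 0 < Z → pinf < g Z := by
    intro Z hZ
    have h1 : pinf ≤ g (Z + 1) := by
      apply le_of_tendsto hlim
      filter_upwards [eventually_ge_atTop (Z + 1)] with W hW
      rcases eq_or_lt_of_le hW with h | h
      · rw [← h]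
      · exact le_of_lt (hanti (by simp; linarith) (by simp; linarith) h)
    have h2 : g (Z + 1) < g Z := hanti (by simpa using hZ) (by simp; linarith) (by linarith)
    linarith
  intro ρ θ hρ hθ
  have hcan : ρ * ((3/2) * θ ^ ((5:ℝ)/2) * P (ρ * θ ^ (-(3:ℝ)/2)) / ρ + a * θ ^ 4 / ρ)
      = (3/2) * θ ^ ((5:ℝ)/2) * P (ρ * θ ^ (-(3:ℝ)/2)) + a * θ ^ 4 := by
    field_simp
  rw [hcan]
  set Z := ρ * θ ^ (-(3:ℝ)/2) with hZdef
  have hZ0 : 0 < Z := by positivity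
  have hkey := key Z hZ0
  have hZ53 : Z ^ ((5:ℝ)/3) = ρ ^ ((5:ℝ)/3) * θ ^ (-(5:ℝ)/2) := by
    rw [hZdef, Real.mul_rpow (le_of_lt hρ) (by positivity),
      ← Real.rpow_mul (le_of_lt hθ)]
    norm_num
  have hPZ : pinf * Z ^ ((5:ℝ)/3) < P Z := by
    rw [hgdef] at hkey
    simp only at hkey
    exact (lt_div_iff₀ (Real.rpow_pos_of_pos hZ0 _)).mp hkey
  have hθpos : (0:ℝ) < θ ^ ((5:ℝ)/2) := Real.rpow_pos_of_pos hθ _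
  have hmul : θ ^ ((5:ℝ)/2) * Z ^ ((5:ℝ)/3) = ρ ^ ((5:ℝ)/3) := by
    have h1 : θ ^ ((5:ℝ)/2) * θ ^ (-(5:ℝ)/2) = 1 := by
      rw [← Real.rpow_add hθ]; norm_num
    calc θ ^ ((5:ℝ)/2) * Z ^ ((5:ℝ)/3)
        = ρ ^ ((5:ℝ)/3) * (θ ^ ((5:ℝ)/2) * θ ^ (-(5:ℝ)/2)) := by rw [hZ53]; ring
      _ = ρ ^ ((5:ℝ)/3) := by rw [h1, mul_one]
  nlinarith [mul_lt_mul_of_pos_left hPZ hθpos]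
end

section
/- Let p, e, s : (0,∞)² → ℝ be twice continuously differentiable and satisfy Gibbs' equation (θ·∂_θ s = ∂_θ e and θ·∂_ρ s = ∂_ρ e − p/ρ²), together with the thermodynamic stability conditions ∂_θ e(ρ,θ) > 0 and ∂_ρ p(ρ,θ) > 0 for all ρ, θ > 0. Let Θ > 0 and H_Θ(ρ,θ) = ρ·(e(ρ,θ) − Θ·s(ρ,θ)). Then for all ρ, θ, ρ̄ > 0: H_Θ(ρ,θ) ≥ H_Θ(ρ̄,Θ) + (ρ − ρ̄)·(d/dρ)[H_Θ(·,Θ)](ρ̄); that is, the graph of H_Θ lies above the tangent plane of ρ ↦ H_Θ(ρ,Θ) at any point (ρ̄,Θ). -/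
open Set


lemma aux_left (f : ℝ → ℝ → ℝ)
    (hf : ContDiffOn ℝ 2 (Function.uncurry f) (Ioi 0 ×ˢ Ioi 0))
    {r t : ℝ} (hr : 0 < r) (ht : 0 < t) :
    DifferentiableAt ℝ (fun x => f x t) r := by
  have hopen : IsOpen ((Ioi (0:ℝ)) ×ˢ (Ioi (0:ℝ))) := isOpen_Ioi.prod isOpen_Ioi
  have h1 : DifferentiableAt ℝ (Function.uncurry f) (r, t) :=
    (hf.differentiableOn (by norm_num)).differentiableAt (hopen.mem_nhds ⟨hr, ht⟩)
  have h2 : DifferentiableAt ℝ (fun x : ℝ => (x, t)) r :=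
    DifferentiableAt.prodMk differentiableAt_id (differentiableAt_const t)
  exact h1.comp r h2

lemma aux_right (f : ℝ → ℝ → ℝ)
    (hf : ContDiffOn ℝ 2 (Function.uncurry f) (Ioi 0 ×ˢ Ioi 0))
    {r t : ℝ} (hr : 0 < r) (ht : 0 < t) :
    DifferentiableAt ℝ (fun x => f r x) t := by
  have hopen : IsOpen ((Ioi (0:ℝ)) ×ˢ (Ioi (0:ℝ))) := isOpen_Ioi.prod isOpen_Ioi
  have h1 : DifferentiableAt ℝ (Function.uncurry f) (r, t) :=
    (hf.differentiableOn (by norm_num)).differentiableAt (hopen.mem_nhds ⟨hr, ht⟩)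
  have h2 : DifferentiableAt ℝ (fun x : ℝ => (r, x)) t :=
    DifferentiableAt.prodMk (differentiableAt_const r) differentiableAt_id
  exact h1.comp t h2

/-- **Coercivity of the ballistic free energy.**
If the `C²` triple `(p, e, s)` satisfies Gibbs' equation and the thermodynamic stability
conditions `∂_θ e > 0`, `∂_ρ p > 0`, then for any `Θ > 0` the ballistic free energy
`H_Θ(ρ,θ) = ρ·(e(ρ,θ) - Θ·s(ρ,θ))` lies above the tangent line of `ρ ↦ H_Θ(ρ,Θ)`
at any point `ρ̄ > 0`. -/
theorem stmt_9 (p e s : ℝ → ℝ → ℝ) (Θ : ℝ) (hΘ : 0 < Θ)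
    (hp : ContDiffOn ℝ 2 (Function.uncurry p) (Ioi 0 ×ˢ Ioi 0))
    (he : ContDiffOn ℝ 2 (Function.uncurry e) (Ioi 0 ×ˢ Ioi 0))
    (hs : ContDiffOn ℝ 2 (Function.uncurry s) (Ioi 0 ×ˢ Ioi 0))
    (gibbs1 : ∀ ρ θ : ℝ, 0 < ρ → 0 < θ →
      θ * deriv (fun t => s ρ t) θ = deriv (fun t => e ρ t) θ)
    (gibbs2 : ∀ ρ θ : ℝ, 0 < ρ → 0 < θ →
      θ * deriv (fun r => s r θ) ρ = deriv (fun r => e r θ) ρ - p ρ θ / ρ ^ 2)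
    (stab1 : ∀ ρ θ : ℝ, 0 < ρ → 0 < θ → 0 < deriv (fun t => e ρ t) θ)
    (stab2 : ∀ ρ θ : ℝ, 0 < ρ → 0 < θ → 0 < deriv (fun r => p r θ) ρ) :
    ∀ ρ θ ρb : ℝ, 0 < ρ → 0 < θ → 0 < ρb →
      ρb * (e ρb Θ - Θ * s ρb Θ)
          + (ρ - ρb) * deriv (fun r => r * (e r Θ - Θ * s r Θ)) ρb
        ≤ ρ * (e ρ θ - Θ * s ρ θ) := by
  intro ρ θ ρb hρ hθ hρb
  -- Step A : temperature minimization
  have stepA : ∀ r : ℝ, 0 < r → e r Θ - Θ * s r Θ ≤ e r θ - Θ * s r θ := by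
    intro r hr
    set F : ℝ → ℝ := fun t => e r t - Θ * s r t with hF
    have hFdiff : ∀ t : ℝ, 0 < t → DifferentiableAt ℝ F t := fun t ht =>
      (aux_right e he hr ht).sub ((aux_right s hs hr ht).const_mul Θ)
    have hFderiv : ∀ t : ℝ, 0 < t →
        deriv F t = deriv (fun u => e r u) t * ((t - Θ) / t) := by
      intro t ht
      have hde := aux_right e he hr ht
      have hds := aux_right s hs hr ht
      have h1 : deriv F t = deriv (fun u => e r u) t - Θ * deriv (fun u => s r u) t := by
        rw [hF, deriv_fun_sub hde (hds.const_mul Θ), deriv_const_mul Θ hds]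
      have hg := gibbs1 r t hr ht
      have hds_eq : deriv (fun u => s r u) t = deriv (fun u => e r u) t / t := by
        field_simp
        linarith [hg]
      rw [h1, hds_eq]
      field_simp
    rcases le_or_gt Θ θ with hle | hlt
    · have hmono : MonotoneOn F (Icc Θ θ) := by
        apply monotoneOn_of_deriv_nonneg (convex_Icc Θ θ)
        · intro t ht
          exact (hFdiff t (lt_of_lt_of_le hΘ ht.1)).continuousAt.continuousWithinAt
        · intro t ht
          rw [interior_Icc] at ht
          exact (hFdiff t (lt_trans hΘ ht.1)).differentiableWithinAt
        · intro t ht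
          rw [interior_Icc] at ht
          have ht0 : 0 < t := lt_trans hΘ ht.1
          rw [hFderiv t ht0]
          have h1 := stab1 r t hr ht0
          have h2 : 0 < (t - Θ) / t := div_pos (by linarith [ht.1]) ht0
          exact le_of_lt (mul_pos h1 h2)
      exact hmono (left_mem_Icc.mpr hle) (right_mem_Icc.mpr hle) hle
    · have hanti : AntitoneOn F (Icc θ Θ) := by
        apply antitoneOn_of_deriv_nonpos (convex_Icc θ Θ)
        · intro t ht
          exact (hFdiff t (lt_of_lt_of_le hθ ht.1)).continuousAt.continuousWithinAt
        · intro t ht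
          rw [interior_Icc] at ht
          exact (hFdiff t (lt_trans hθ ht.1)).differentiableWithinAt
        · intro t ht
          rw [interior_Icc] at ht
          have ht0 : 0 < t := lt_trans hθ ht.1
          rw [hFderiv t ht0]
          have h1 := stab1 r t hr ht0
          have h2 : t - Θ < 0 := by linarith [ht.2]
          have : (t - Θ) / t < 0 := div_neg_of_neg_of_pos h2 ht0
          nlinarith
      exact hanti (left_mem_Icc.mpr hlt.le) (right_mem_Icc.mpr hlt.le) hlt.le
  -- Step B : convexity in ρ at θ = Θ
  set G : ℝ → ℝ := fun r => r * (e r Θ - Θ * s r Θ) with hG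
  set G' : ℝ → ℝ := fun r => (e r Θ - Θ * s r Θ) + p r Θ / r with hG'
  have hKderiv : ∀ r : ℝ, 0 < r →
      HasDerivAt (fun x => e x Θ - Θ * s x Θ) (p r Θ / r ^ 2) r := by
    intro r hr
    have hde := (aux_left e he hr hΘ).hasDerivAt
    have hds := (aux_left s hs hr hΘ).hasDerivAt
    have h := hde.sub (hds.const_mul Θ)
    have hg := gibbs2 r Θ hr hΘ
    refine h.congr_deriv ?_
    linarith
  have hGderiv : ∀ r : ℝ, 0 < r → HasDerivAt G (G' r) r := by
    intro r hr
    have h := (hasDerivAt_id' (x := r)).mul (hKderiv r hr)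
    refine h.congr_deriv ?_
    rw [hG']
    field_simp
  have hG'deriv : ∀ r : ℝ, 0 < r →
      HasDerivAt G' (deriv (fun x => p x Θ) r / r) r := by
    intro r hr
    have hK := hKderiv r hr
    have hpd := (aux_left p hp hr hΘ).hasDerivAt
    have hdiv : HasDerivAt (fun x => p x Θ / x)
        ((deriv (fun x => p x Θ) r * r - p r Θ * 1) / r ^ 2) r :=
      hpd.div (hasDerivAt_id r) hr.ne'
    have h := hK.add hdiv
    refine h.congr_deriv ?_
    field_simp
    ring
  have hG'mono : StrictMonoOn G' (Ioi 0) := by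
    apply strictMonoOn_of_deriv_pos (convex_Ioi 0)
    · intro x hx
      exact ((hG'deriv x hx).differentiableAt).continuousAt.continuousWithinAt
    · intro x hx
      rw [interior_Ioi] at hx
      rw [(hG'deriv x hx).deriv]
      exact div_pos (stab2 x Θ hx hΘ) hx
  have hderivG : deriv G ρb = G' ρb := (hGderiv ρb hρb).deriv
  have tangent : G ρb + (ρ - ρb) * G' ρb ≤ G ρ := by
    rcases lt_trichotomy ρ ρb with h | h | h
    · obtain ⟨c, hc, hceq⟩ := exists_hasDerivAt_eq_slope G G' h
        (fun x hx => ((hGderiv x (lt_of_lt_of_le hρ hx.1)).differentiableAt).continuousAt.continuousWithinAt)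
        (fun x hx => hGderiv x (lt_trans hρ hx.1))
      have hclt : G' c < G' ρb :=
        hG'mono (lt_trans hρ hc.1) hρb hc.2
      have hd : c ∈ Ioo ρ ρb := hc
      have : G' c * (ρb - ρ) = G ρb - G ρ := by
        rw [hceq]
        exact div_mul_cancel₀ _ (sub_ne_zero.mpr h.ne')
      nlinarith [this, hclt, sub_pos.mpr h]
    · subst h; simp
    · obtain ⟨c, hc, hceq⟩ := exists_hasDerivAt_eq_slope G G' h
        (fun x hx => ((hGderiv x (lt_of_lt_of_le hρb hx.1)).differentiableAt).continuousAt.continuousWithinAt)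
        (fun x hx => hGderiv x (lt_trans hρb hx.1))
      have hclt : G' ρb < G' c :=
        hG'mono hρb (lt_trans hρb hc.1) hc.1
      have : G' c * (ρ - ρb) = G ρ - G ρb := by
        rw [hceq]
        exact div_mul_cancel₀ _ (sub_ne_zero.mpr h.ne')
      nlinarith [this, hclt, sub_pos.mpr h]
  calc ρb * (e ρb Θ - Θ * s ρb Θ) + (ρ - ρb) * deriv G ρb
      = G ρb + (ρ - ρb) * G' ρb := by rw [hderivG, hG]
    _ ≤ G ρ := tangent
    _ = ρ * (e ρ Θ - Θ * s ρ Θ) := by rw [hG]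
    _ ≤ ρ * (e ρ θ - Θ * s ρ θ) := by
        have := stepA ρ hρ
        nlinarith
end

section
/- Let T > 0, ε ≥ 0, and let ρ : [0,T]×ℝ³ → (0,∞) be continuous, C¹ in time and C² in space on (0,T)×ℝ³, and u : [0,T]×ℝ³ → ℝ³ be C¹, both ℤ³-periodic in the spatial variable, satisfying ∂_t ρ + div(ρ·u) = ε·Δρ pointwise on (0,T)×ℝ³. Then for every t ∈ [0,T] and x ∈ ℝ³, ρ(t,x) ≥ (min_{y∈ℝ³} ρ(0,y)) · exp(− ∫₀ᵗ max_{y∈ℝ³} |div u(s,y)| ds). In particular, ρ remains bounded below away from zero on [0,T] in terms of the initial datum and the L^∞-norm in space of div u. -/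
open Set MeasureTheory

/-- Partial derivative `∂_j f x` of a scalar field on `ℝ³`. -/
noncomputable def pd (f : (Fin 3 → ℝ) → ℝ) (j : Fin 3) (x : Fin 3 → ℝ) : ℝ :=
  fderiv ℝ f x (Pi.single j 1)

namespace Stmt15Aux

lemma decomp (x : Fin 3 → ℝ) :
    ∃ y ∈ Icc (0 : Fin 3 → ℝ) 1, ∃ k : Fin 3 → ℤ, x = y + fun i => (k i : ℝ) := by
  refine ⟨fun i => Int.fract (x i),
    ⟨fun i => Int.fract_nonneg (x i), fun i => (Int.fract_lt_one (x i)).le⟩,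
    fun i => ⌊x i⌋, ?_⟩
  funext i
  simp only [Pi.add_apply]
  rw [Int.fract]
  ring

lemma cube_ne : (Icc (0 : Fin 3 → ℝ) 1).Nonempty := ⟨0, le_refl _, fun _ => zero_le_one⟩

variable {F : (Fin 3 → ℝ) → ℝ}

lemma exists_min (hp : ∀ (x : Fin 3 → ℝ) (k : Fin 3 → ℤ), F (x + fun i => (k i : ℝ)) = F x)
    (hc : Continuous F) :
    ∃ x₀ ∈ Icc (0 : Fin 3 → ℝ) 1, (∀ x, F x₀ ≤ F x) ∧ sInf (range F) = F x₀ := by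
  obtain ⟨x₀, hx₀, hmin⟩ := isCompact_Icc.exists_isMinOn cube_ne hc.continuousOn
  have hall : ∀ x, F x₀ ≤ F x := by
    intro x
    obtain ⟨y, hy, k, rfl⟩ := decomp x
    rw [hp y k]
    exact hmin hy
  exact ⟨x₀, hx₀, hall, IsLeast.csInf_eq ⟨⟨x₀, rfl⟩, by rintro _ ⟨x, rfl⟩; exact hall x⟩⟩

lemma exists_max (hp : ∀ (x : Fin 3 → ℝ) (k : Fin 3 → ℤ), F (x + fun i => (k i : ℝ)) = F x)
    (hc : Continuous F) :
    ∃ x₁ ∈ Icc (0 : Fin 3 → ℝ) 1, (∀ x, F x ≤ F x₁) ∧ sSup (range F) = F x₁ := by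
  obtain ⟨x₁, hx₁, hmax⟩ := isCompact_Icc.exists_isMaxOn cube_ne hc.continuousOn
  have hall : ∀ x, F x ≤ F x₁ := by
    intro x
    obtain ⟨y, hy, k, rfl⟩ := decomp x
    rw [hp y k]
    exact hmax hy
  exact ⟨x₁, hx₁, hall, IsGreatest.csSup_eq ⟨⟨x₁, rfl⟩, by rintro _ ⟨x, rfl⟩; exact hall x⟩⟩

lemma bddBelow_range (hp : ∀ (x : Fin 3 → ℝ) (k : Fin 3 → ℤ), F (x + fun i => (k i : ℝ)) = F x)
    (hc : Continuous F) : BddBelow (range F) := by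
  obtain ⟨x₀, -, hall, -⟩ := exists_min hp hc
  exact ⟨F x₀, by rintro _ ⟨x, rfl⟩; exact hall x⟩

lemma bddAbove_range (hp : ∀ (x : Fin 3 → ℝ) (k : Fin 3 → ℤ), F (x + fun i => (k i : ℝ)) = F x)
    (hc : Continuous F) : BddAbove (range F) := by
  obtain ⟨x₁, -, hall, -⟩ := exists_max hp hc
  exact ⟨F x₁, by rintro _ ⟨x, rfl⟩; exact hall x⟩

lemma slice_cont {G : ℝ → (Fin 3 → ℝ) → ℝ} {s : Set ℝ}
    (hG : ContinuousOn (fun z : ℝ × (Fin 3 → ℝ) => G z.1 z.2) (s ×ˢ (univ : Set (Fin 3 → ℝ))))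
    {t : ℝ} (ht : t ∈ s) : Continuous (G t) := by
  rw [← continuousOn_univ]
  intro y _
  have h2 : ContinuousWithinAt (fun y' : Fin 3 → ℝ => ((t, y') : ℝ × (Fin 3 → ℝ))) univ y :=
    (Continuous.continuousWithinAt (continuous_const.prodMk continuous_id))
  exact (hG (t, y) ⟨ht, mem_univ y⟩).comp h2 (fun y' _ => ⟨ht, mem_univ _⟩)

lemma cont_sInf {G : ℝ → (Fin 3 → ℝ) → ℝ} {a b : ℝ}
    (hG : ContinuousOn (fun z : ℝ × (Fin 3 → ℝ) => G z.1 z.2) (Icc a b ×ˢ (univ : Set (Fin 3 → ℝ))))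
    (hper : ∀ t ∈ Icc a b, ∀ (x : Fin 3 → ℝ) (k : Fin 3 → ℤ), G t (x + fun i => (k i : ℝ)) = G t x) :
    ContinuousOn (fun t => sInf (range (G t))) (Icc a b) := by
  have hone : ∀ ε : ℝ, ∀ t ∈ Icc a b, ∀ t' ∈ Icc a b,
      (∀ y ∈ Icc (0 : Fin 3 → ℝ) 1, dist (G t y) (G t' y) ≤ ε) →
      sInf (range (G t)) ≤ sInf (range (G t')) + ε := by
    intro ε t ht t' ht' hY
    obtain ⟨x₀, hx₀, hall', heq'⟩ := exists_min (hper t' ht') (slice_cont hG ht')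
    have h1 : sInf (range (G t)) ≤ G t x₀ :=
      csInf_le (bddBelow_range (hper t ht) (slice_cont hG ht)) ⟨x₀, rfl⟩
    have h2 := hY x₀ hx₀
    rw [Real.dist_eq, abs_le] at h2
    rw [heq']
    linarith [h2.1, h2.2]
  intro t ht
  rw [Metric.continuousWithinAt_iff]
  intro ε hε
  have hK : IsCompact ((Icc a b) ×ˢ (Icc (0 : Fin 3 → ℝ) 1)) := isCompact_Icc.prod isCompact_Icc
  have hUC := hK.uniformContinuousOn_of_continuous (hG.mono (prod_mono_right (subset_univ _)))
  rw [Metric.uniformContinuousOn_iff] at hUC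
  obtain ⟨δ, hδ, H⟩ := hUC (ε / 2) (half_pos hε)
  refine ⟨δ, hδ, ?_⟩
  intro t' ht' hdist
  have hY : ∀ y ∈ Icc (0 : Fin 3 → ℝ) 1, dist (G t' y) (G t y) ≤ ε / 2 := by
    intro y hy
    have hd : dist ((t', y) : ℝ × (Fin 3 → ℝ)) (t, y) < δ := by
      rw [Prod.dist_eq]
      simp only [dist_self]
      rw [max_eq_left dist_nonneg]
      exact hdist
    exact (H (t', y) ⟨ht', hy⟩ (t, y) ⟨ht, hy⟩ hd).le
  have hY' : ∀ y ∈ Icc (0 : Fin 3 → ℝ) 1, dist (G t y) (G t' y) ≤ ε / 2 := by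
    intro y hy
    rw [dist_comm]
    exact hY y hy
  have h1 := hone (ε / 2) t' ht' t ht hY
  have h2 := hone (ε / 2) t ht t' ht' hY'
  rw [Real.dist_eq, abs_lt]
  constructor <;> linarith

lemma cont_sSup {G : ℝ → (Fin 3 → ℝ) → ℝ} {a b : ℝ}
    (hG : ContinuousOn (fun z : ℝ × (Fin 3 → ℝ) => G z.1 z.2) (Icc a b ×ˢ (univ : Set (Fin 3 → ℝ))))
    (hper : ∀ t ∈ Icc a b, ∀ (x : Fin 3 → ℝ) (k : Fin 3 → ℤ), G t (x + fun i => (k i : ℝ)) = G t x) :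
    ContinuousOn (fun t => sSup (range (G t))) (Icc a b) := by
  have hone : ∀ ε : ℝ, ∀ t ∈ Icc a b, ∀ t' ∈ Icc a b,
      (∀ y ∈ Icc (0 : Fin 3 → ℝ) 1, dist (G t y) (G t' y) ≤ ε) →
      sSup (range (G t)) ≤ sSup (range (G t')) + ε := by
    intro ε t ht t' ht' hY
    obtain ⟨x₁, hx₁, hall, heq'⟩ := exists_max (hper t ht) (slice_cont hG ht)
    have h1 : G t' x₁ ≤ sSup (range (G t')) :=
      le_csSup (bddAbove_range (hper t' ht') (slice_cont hG ht')) ⟨x₁, rfl⟩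
    have h2 := hY x₁ hx₁
    rw [Real.dist_eq, abs_le] at h2
    rw [heq']
    linarith [h2.1, h2.2]
  intro t ht
  rw [Metric.continuousWithinAt_iff]
  intro ε hε
  have hK : IsCompact ((Icc a b) ×ˢ (Icc (0 : Fin 3 → ℝ) 1)) := isCompact_Icc.prod isCompact_Icc
  have hUC := hK.uniformContinuousOn_of_continuous (hG.mono (prod_mono_right (subset_univ _)))
  rw [Metric.uniformContinuousOn_iff] at hUC
  obtain ⟨δ, hδ, H⟩ := hUC (ε / 2) (half_pos hε)
  refine ⟨δ, hδ, ?_⟩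
  intro t' ht' hdist
  have hY : ∀ y ∈ Icc (0 : Fin 3 → ℝ) 1, dist (G t' y) (G t y) ≤ ε / 2 := by
    intro y hy
    have hd : dist ((t', y) : ℝ × (Fin 3 → ℝ)) (t, y) < δ := by
      rw [Prod.dist_eq]
      simp only [dist_self]
      rw [max_eq_left dist_nonneg]
      exact hdist
    exact (H (t', y) ⟨ht', hy⟩ (t, y) ⟨ht, hy⟩ hd).le
  have hY' : ∀ y ∈ Icc (0 : Fin 3 → ℝ) 1, dist (G t y) (G t' y) ≤ ε / 2 := by
    intro y hy
    rw [dist_comm]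
    exact hY y hy
  have h1 := hone (ε / 2) t' ht' t ht hY
  have h2 := hone (ε / 2) t ht t' ht' hY'
  rw [Real.dist_eq, abs_lt]
  constructor <;> linarith

lemma second_nonneg {g G : ℝ → ℝ} {c : ℝ}
    (hg : ∀ s, HasDerivAt g (G s) s) (hG : HasDerivAt G c 0) (hG0 : G 0 = 0)
    (hmin : ∀ s, g 0 ≤ g s) : 0 ≤ c := by
  by_contra hc
  push_neg at hc
  have h2 : Filter.Tendsto (slope G 0) (nhdsWithin 0 (Ioi 0)) (nhds c) :=
    (hasDerivAt_iff_tendsto_slope.mp hG).mono_left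
      (nhdsWithin_mono _ (fun z hz => Set.mem_compl_singleton_iff.mpr (ne_of_gt hz)))
  have h1 : ∀ᶠ s in nhdsWithin (0:ℝ) (Ioi 0), slope G 0 s < 0 := h2.eventually_lt_const hc
  obtain ⟨uu, huu, hsub⟩ := mem_nhdsGT_iff_exists_Ioo_subset.mp h1
  have hGneg : ∀ s ∈ Ioo (0:ℝ) uu, G s < 0 := by
    intro s hs
    have h3 := hsub hs
    rw [Set.mem_setOf_eq, slope_def_field, hG0, sub_zero, sub_zero] at h3
    rcases div_neg_iff.mp h3 with h | h
    · linarith [h.2, hs.1]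
    · exact h.1
  have hanti : StrictAntiOn g (Icc 0 uu) := by
    apply strictAntiOn_of_deriv_neg (convex_Icc 0 uu)
      (fun s _ => (hg s).continuousAt.continuousWithinAt)
    intro s hs
    rw [interior_Icc] at hs
    rw [(hg s).deriv]
    exact hGneg s hs
  have huu' : (0:ℝ) < uu := huu
  have := hanti (left_mem_Icc.mpr huu'.le) (right_mem_Icc.mpr huu'.le) huu'
  linarith [hmin uu]

lemma pd_shift {g : (Fin 3 → ℝ) → ℝ} {k : Fin 3 → ℝ}
    (h : ∀ y, g (y + k) = g y) (x : Fin 3 → ℝ) (j : Fin 3)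
    (hd : DifferentiableAt ℝ g (x + k)) :
    pd g j (x + k) = pd g j x := by
  have h1 : HasFDerivAt (fun y : Fin 3 → ℝ => g (y + k)) (fderiv ℝ g (x + k)) x := by
    have h2 := hd.hasFDerivAt.comp x ((hasFDerivAt_id x).add_const k)
    exact h2
  have heqf : (fun y : Fin 3 → ℝ => g (y + k)) = g := funext h
  rw [heqf] at h1
  unfold pd
  rw [h1.fderiv]

end Stmt15Aux

namespace Stmt15Aux

noncomputable def Mdiv (u : ℝ → (Fin 3 → ℝ) → Fin 3 → ℝ) (s : ℝ) : ℝ :=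
  sSup (Set.range fun y => |∑ j, pd (fun z => u s z j) j y|)

end Stmt15Aux

open Stmt15Aux in
set_option maxHeartbeats 1000000 in
/-- **Parabolic minimum principle for the regularized continuity equation.**
If `ρ > 0` is continuous on `[0,T] × ℝ³`, `C¹` in time and `C²` in space on `(0,T) × ℝ³`,
`u` is `C¹`, both are `ℤ³`-periodic in space, and `∂_t ρ + div(ρu) = ε·Δρ`, then
`ρ(t,x) ≥ (min_y ρ(0,y)) · exp(-∫₀ᵗ max_y |div u(s,y)| ds)` for all `t ∈ [0,T]`, `x ∈ ℝ³`. -/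
theorem stmt_15 (T : ℝ) (hT : 0 < T) (ε : ℝ) (hε : 0 ≤ ε)
    (ρ ρt : ℝ → (Fin 3 → ℝ) → ℝ) (u : ℝ → (Fin 3 → ℝ) → Fin 3 → ℝ)
    (hρc : ContinuousOn (fun z : ℝ × (Fin 3 → ℝ) => ρ z.1 z.2)
      (Icc 0 T ×ˢ (univ : Set (Fin 3 → ℝ))))
    (hρpos : ∀ t ∈ Icc (0:ℝ) T, ∀ x, 0 < ρ t x)
    (hρt : ∀ t ∈ Ioo (0:ℝ) T, ∀ x, HasDerivAt (fun τ => ρ τ x) (ρt t x) t)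
    (hρx : ∀ t ∈ Ioo (0:ℝ) T, ∀ x, ContDiffAt ℝ 2 (ρ t) x)
    (huc : ContinuousOn (fun z : ℝ × (Fin 3 → ℝ) => u z.1 z.2)
      (Icc 0 T ×ˢ (univ : Set (Fin 3 → ℝ))))
    (hux : ∀ z ∈ Ioo (0:ℝ) T ×ˢ (univ : Set (Fin 3 → ℝ)),
      ContDiffAt ℝ 1 (fun w : ℝ × (Fin 3 → ℝ) => u w.1 w.2) z)
    (hρper : ∀ t x, ∀ k : Fin 3 → ℤ, ρ t (x + fun i => (k i : ℝ)) = ρ t x)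
    (huper : ∀ t x, ∀ k : Fin 3 → ℤ, u t (x + fun i => (k i : ℝ)) = u t x)
    (heq : ∀ t ∈ Ioo (0:ℝ) T, ∀ x,
      ρt t x + (∑ j, pd (fun y => ρ t y * u t y j) j x)
        = ε * ∑ j, pd (fun y => pd (ρ t) j y) j x)
    (hint : IntervalIntegrable
      (fun s => sSup (Set.range fun y => |∑ j, pd (fun z => u s z j) j y|))
      volume 0 T) :
    ∀ t ∈ Icc (0:ℝ) T, ∀ x,
      sInf (Set.range (ρ 0)) *
          Real.exp (- ∫ s in (0:ℝ)..t,
            sSup (Set.range fun y => |∑ j, pd (fun z => u s z j) j y|))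
        ≤ ρ t x := by
  intro t ht x
  show sInf (Set.range (ρ 0)) * Real.exp (- ∫ s in (0:ℝ)..t, Mdiv u s) ≤ ρ t x
  have hintM : IntervalIntegrable (Mdiv u) volume 0 T := hint
  -- ρ basics
  have hρslice : ∀ τ ∈ Icc (0:ℝ) T, Continuous (ρ τ) := fun τ hτ => slice_cont hρc hτ
  have hmdata : ∀ τ ∈ Icc (0:ℝ) T, ∃ x₀ ∈ Icc (0 : Fin 3 → ℝ) 1,
      (∀ y, ρ τ x₀ ≤ ρ τ y) ∧ sInf (range (ρ τ)) = ρ τ x₀ :=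
    fun τ hτ => exists_min (hρper τ) (hρslice τ hτ)
  have hmpos : ∀ τ ∈ Icc (0:ℝ) T, 0 < sInf (range (ρ τ)) := by
    intro τ hτ
    obtain ⟨x₀, -, -, he⟩ := hmdata τ hτ
    rw [he]
    exact hρpos τ hτ x₀
  have hmle : ∀ τ ∈ Icc (0:ℝ) T, ∀ y, sInf (range (ρ τ)) ≤ ρ τ y :=
    fun τ hτ y => csInf_le (bddBelow_range (hρper τ) (hρslice τ hτ)) ⟨y, rfl⟩
  have hmcont : ContinuousOn (fun τ => sInf (range (ρ τ))) (Icc 0 T) :=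
    cont_sInf hρc (fun τ _ => hρper τ)
  -- u basics
  set U : ℝ × (Fin 3 → ℝ) → (Fin 3 → ℝ) := fun w => u w.1 w.2 with hU_def
  have hΩ : IsOpen (Ioo (0:ℝ) T ×ˢ (univ : Set (Fin 3 → ℝ))) := isOpen_Ioo.prod isOpen_univ
  have hUC1 : ContDiffOn ℝ 1 U (Ioo (0:ℝ) T ×ˢ univ) := fun z hz => (hux z hz).contDiffWithinAt
  have hUd : ∀ s ∈ Ioo (0:ℝ) T, ∀ y, DifferentiableAt ℝ U (s, y) :=
    fun s hs y => (hux (s, y) ⟨hs, mem_univ y⟩).differentiableAt one_ne_zero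
  have hfdC : ContinuousOn (fderiv ℝ U) (Ioo (0:ℝ) T ×ˢ univ) :=
    hUC1.continuousOn_fderiv_of_isOpen hΩ le_rfl
  have hslU : ∀ s ∈ Ioo (0:ℝ) T, ∀ (y : Fin 3 → ℝ) (j : Fin 3),
      HasFDerivAt (fun z => u s z j)
        ((ContinuousLinearMap.proj (R := ℝ) (φ := fun _ : Fin 3 => ℝ) j).comp
          ((fderiv ℝ U (s, y)).comp (ContinuousLinearMap.inr ℝ ℝ (Fin 3 → ℝ)))) y := by
    intro s hs y j
    have h1 : HasFDerivAt (fun z : Fin 3 → ℝ => U (s, z))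
        ((fderiv ℝ U (s, y)).comp (ContinuousLinearMap.inr ℝ ℝ (Fin 3 → ℝ))) y :=
      (hUd s hs y).hasFDerivAt.comp y (hasFDerivAt_prodMk_right s y)
    exact ((ContinuousLinearMap.proj (R := ℝ) (φ := fun _ : Fin 3 => ℝ) j).hasFDerivAt).comp y h1
  have hpdU : ∀ s ∈ Ioo (0:ℝ) T, ∀ (y : Fin 3 → ℝ) (j : Fin 3),
      pd (fun z => u s z j) j y = fderiv ℝ U (s, y) ((0 : ℝ), Pi.single j 1) j := by
    intro s hs y j
    unfold pd
    rw [(hslU s hs y j).fderiv]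
    rfl
  have hD2 : ContinuousOn (fun z : ℝ × (Fin 3 → ℝ) => ∑ j, (fderiv ℝ U z ((0:ℝ), Pi.single j 1)) j)
      (Ioo (0:ℝ) T ×ˢ univ) := by
    apply continuousOn_finset_sum
    intro j _
    exact ((continuous_apply j).comp
      ((ContinuousLinearMap.apply ℝ (Fin 3 → ℝ) ((0:ℝ), Pi.single j 1)).continuous)).comp_continuousOn hfdC
  have hDC : ContinuousOn (fun z : ℝ × (Fin 3 → ℝ) => ∑ j, pd (fun w => u z.1 w j) j z.2)
      (Ioo (0:ℝ) T ×ˢ univ) := by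
    apply hD2.congr
    rintro ⟨s, y⟩ ⟨hs, -⟩
    exact Finset.sum_congr rfl fun j _ => hpdU s hs y j
  have hDper : ∀ s ∈ Ioo (0:ℝ) T, ∀ (y : Fin 3 → ℝ) (k : Fin 3 → ℤ),
      (∑ j, pd (fun z => u s z j) j (y + fun i => (k i : ℝ)))
        = ∑ j, pd (fun z => u s z j) j y := by
    intro s hs y k
    refine Finset.sum_congr rfl fun j _ => ?_
    exact pd_shift (fun y' => congrFun (huper s y' k) j) y j ((hslU s hs _ j).differentiableAt)
  have habsper : ∀ s ∈ Ioo (0:ℝ) T, ∀ (y : Fin 3 → ℝ) (k : Fin 3 → ℤ),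
      |∑ j, pd (fun z => u s z j) j (y + fun i => (k i : ℝ))|
        = |∑ j, pd (fun z => u s z j) j y| :=
    fun s hs y k => by rw [hDper s hs y k]
  have hDsliceCont : ∀ s ∈ Ioo (0:ℝ) T, Continuous (fun y => ∑ j, pd (fun z => u s z j) j y) :=
    fun s hs => slice_cont (G := fun s y => ∑ j, pd (fun z => u s z j) j y) hDC hs
  have hMge : ∀ s ∈ Ioo (0:ℝ) T, ∀ y, |∑ j, pd (fun z => u s z j) j y| ≤ Mdiv u s :=
    fun s hs y => le_csSup (bddAbove_range (habsper s hs) ((hDsliceCont s hs).abs)) ⟨y, rfl⟩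
  have hMcontAt : ∀ σ ∈ Ioo (0:ℝ) T, ContinuousAt (Mdiv u) σ := by
    intro σ hσ
    have ha'b' : Icc (σ / 2) ((σ + T) / 2) ×ˢ (univ : Set (Fin 3 → ℝ))
        ⊆ Ioo (0:ℝ) T ×ˢ univ := by
      apply prod_mono_left
      intro τ hτ
      exact ⟨lt_of_lt_of_le (half_pos hσ.1) hτ.1, lt_of_le_of_lt hτ.2 (by linarith [hσ.2])⟩
    have hmemII : ∀ τ ∈ Icc (σ / 2) ((σ + T) / 2), τ ∈ Ioo (0:ℝ) T :=
      fun τ hτ => ⟨lt_of_lt_of_le (half_pos hσ.1) hτ.1, lt_of_le_of_lt hτ.2 (by linarith [hσ.2])⟩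
    have hGc : ContinuousOn
        (fun z : ℝ × (Fin 3 → ℝ) => |∑ j, pd (fun w => u z.1 w j) j z.2|)
        (Icc (σ / 2) ((σ + T) / 2) ×ˢ univ) := (hDC.mono ha'b').abs
    have hc := cont_sSup (G := fun s y => |∑ j, pd (fun w => u s w j) j y|) hGc
      (fun τ hτ y k => habsper τ (hmemII τ hτ) y k)
    have hnb : Icc (σ / 2) ((σ + T) / 2) ∈ nhds σ :=
      Icc_mem_nhds (by linarith [hσ.1]) (by linarith [hσ.2])
    exact hc.continuousAt hnb
  have hMcontOn : ContinuousOn (Mdiv u) (Ioo (0:ℝ) T) :=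
    fun σ hσ => (hMcontAt σ hσ).continuousWithinAt
  have hPd : ∀ σ ∈ Ioo (0:ℝ) T,
      HasDerivAt (fun τ => ∫ s in (0:ℝ)..τ, Mdiv u s) (Mdiv u σ) σ := by
    intro σ hσ
    apply intervalIntegral.integral_hasDerivAt_right
    · exact hintM.mono_set
        (by rw [uIcc_of_le hσ.1.le, uIcc_of_le hT.le]; exact Icc_subset_Icc le_rfl hσ.2.le)
    · exact (hMcontOn.stronglyMeasurableAtFilter isOpen_Ioo) σ hσ
    · exact hMcontAt σ hσ
  have hPcont : ContinuousOn (fun τ => ∫ s in (0:ℝ)..τ, Mdiv u s) (Icc 0 T) := by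
    have h1 := intervalIntegral.continuousOn_primitive_interval' hintM left_mem_uIcc
    rwa [uIcc_of_le hT.le] at h1
  -- the parabolic minimum principle at a spatial minimizer
  have hkey : ∀ σ ∈ Ioo (0:ℝ) T, ∀ x₀ : Fin 3 → ℝ, (∀ y, ρ σ x₀ ≤ ρ σ y) →
      -(Mdiv u σ) * ρ σ x₀ ≤ ρt σ x₀ := by
    intro σ hσ x₀ hmin
    have hσ' : σ ∈ Icc (0:ℝ) T := ⟨hσ.1.le, hσ.2.le⟩
    have hC2 : ∀ y, ContDiffAt ℝ 2 (ρ σ) y := hρx σ hσ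
    have hdiff : ∀ y, DifferentiableAt ℝ (ρ σ) y :=
      fun y => (hC2 y).differentiableAt (by norm_num)
    have hloc : IsLocalMin (ρ σ) x₀ := Filter.Eventually.of_forall hmin
    have hgrad : fderiv ℝ (ρ σ) x₀ = 0 := hloc.fderiv_eq_zero
    have hpd0 : ∀ j, pd (ρ σ) j x₀ = 0 := by
      intro j
      unfold pd
      rw [hgrad]
      rfl
    have hlap : ∀ j : Fin 3, 0 ≤ pd (fun y => pd (ρ σ) j y) j x₀ := by
      intro j
      set e : Fin 3 → ℝ := Pi.single j 1 with he
      show 0 ≤ fderiv ℝ (fun y => fderiv ℝ (ρ σ) y e) x₀ e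
      have h0 : x₀ + (0:ℝ) • e = x₀ := by simp
      have hL : ∀ s : ℝ, HasDerivAt (fun s : ℝ => x₀ + s • e) e s := by
        intro s
        simpa using ((hasDerivAt_id s).smul_const e).const_add x₀
      have hg : ∀ s : ℝ, HasDerivAt (fun s => ρ σ (x₀ + s • e)) (fderiv ℝ (ρ σ) (x₀ + s • e) e) s :=
        fun s => (hdiff _).hasFDerivAt.comp_hasDerivAt s (hL s)
      have hfd1 : DifferentiableAt ℝ (fderiv ℝ (ρ σ)) x₀ :=
        ((hC2 x₀).fderiv_right (m := 1) (by norm_num)).differentiableAt one_ne_zero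
      have hBd : DifferentiableAt ℝ (fun y => fderiv ℝ (ρ σ) y e) x₀ :=
        ((ContinuousLinearMap.apply ℝ ℝ e).differentiable.differentiableAt).comp x₀ hfd1
      rw [← h0] at hBd
      have hG : HasDerivAt (fun s : ℝ => fderiv ℝ (ρ σ) (x₀ + s • e) e)
          (fderiv ℝ (fun y => fderiv ℝ (ρ σ) y e) (x₀ + (0:ℝ) • e) e) 0 :=
        by have := hBd.hasFDerivAt.comp_hasDerivAt 0 (hL 0); exact this
      have hG0 : fderiv ℝ (ρ σ) (x₀ + (0:ℝ) • e) e = 0 := by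
        rw [h0, hgrad]
        rfl
      have hgm : ∀ s : ℝ, ρ σ (x₀ + (0:ℝ) • e) ≤ ρ σ (x₀ + s • e) := by
        intro s
        rw [h0]
        exact hmin _
      have := second_nonneg hg hG hG0 hgm
      rwa [h0] at this
    have hvd : ∀ j, DifferentiableAt ℝ (fun z => u σ z j) x₀ :=
      fun j => (hslU σ hσ x₀ j).differentiableAt
    have hprod : ∀ j : Fin 3,
        pd (fun y => ρ σ y * u σ y j) j x₀ = ρ σ x₀ * pd (fun z => u σ z j) j x₀ := by
      intro j
      unfold pd
      rw [fderiv_fun_mul (hdiff x₀) (hvd j), hgrad]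
      simp
    have hpde := heq σ hσ x₀
    have hsum : (∑ j, pd (fun y => ρ σ y * u σ y j) j x₀)
        = ρ σ x₀ * ∑ j, pd (fun z => u σ z j) j x₀ := by
      rw [Finset.mul_sum]
      exact Finset.sum_congr rfl fun j _ => hprod j
    have hΔ : 0 ≤ ∑ j, pd (fun y => pd (ρ σ) j y) j x₀ := Finset.sum_nonneg fun j _ => hlap j
    have hDb := abs_le.mp (hMge σ hσ x₀)
    have hpos := hρpos σ hσ' x₀
    nlinarith [mul_le_mul_of_nonneg_left hDb.2 hpos.le, mul_nonneg hε hΔ,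
      mul_le_mul_of_nonneg_left hDb.1 hpos.le]
  -- monotonicity of log m + P on (0, T)
  have hθmono : ∀ a b : ℝ, 0 < a → a ≤ b → b < T →
      Real.log (sInf (range (ρ a))) + (∫ s in (0:ℝ)..a, Mdiv u s)
        ≤ Real.log (sInf (range (ρ b))) + (∫ s in (0:ℝ)..b, Mdiv u s) := by
    intro a b ha hab hbT
    have hIcc_sub : Icc a b ⊆ Icc 0 T := Icc_subset_Icc ha.le hbT.le
    have hθcont : ContinuousOn
        (fun τ => Real.log (sInf (range (ρ τ))) + (∫ s in (0:ℝ)..τ, Mdiv u s)) (Icc a b) :=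
      ((hmcont.mono hIcc_sub).log fun τ hτ => (hmpos τ (hIcc_sub hτ)).ne').add
        (hPcont.mono hIcc_sub)
    have hfc : ContinuousOn
        (fun z => Real.log (sInf (range (ρ (a + b - z)))) + (∫ s in (0:ℝ)..(a + b - z), Mdiv u s))
        (Icc a b) := by
      apply hθcont.comp (Continuous.continuousOn (continuous_const.sub continuous_id))
      intro z hz
      show a + b - z ∈ Icc a b
      exact ⟨by linarith [hz.2], by linarith [hz.1]⟩
    have key := image_le_of_liminf_slope_right_le_deriv_boundary
      (f := fun z => Real.log (sInf (range (ρ (a + b - z)))) + (∫ s in (0:ℝ)..(a + b - z), Mdiv u s))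
      (a := a) (b := b)
      (B := fun _ => Real.log (sInf (range (ρ b))) + (∫ s in (0:ℝ)..b, Mdiv u s))
      (B' := fun _ => (0:ℝ))
      hfc (by simp) continuousOn_const
      (fun w _ => hasDerivWithinAt_const w _ _)
      ?bound
    case bound =>
      intro w hw r hr
      have hσm : a + b - w ∈ Ioo (0:ℝ) T :=
        ⟨by linarith [hw.1, hw.2], by linarith [hw.1, hw.2]⟩
      have hσI : a + b - w ∈ Icc (0:ℝ) T := ⟨hσm.1.le, hσm.2.le⟩
      obtain ⟨x₀, hx₀c, hminy, hmeq⟩ := hmdata (a + b - w) hσI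
      have hρ0 : 0 < ρ (a + b - w) x₀ := hρpos _ hσI x₀
      have hψ : HasDerivAt
          (fun s => Real.log (ρ s x₀) + ∫ s' in (0:ℝ)..s, Mdiv u s')
          (ρt (a + b - w) x₀ / ρ (a + b - w) x₀ + Mdiv u (a + b - w)) (a + b - w) :=
        ((hρt _ hσm x₀).log hρ0.ne').add (hPd _ hσm)
      have haff : HasDerivAt (fun z : ℝ => a + b - z) (-1 : ℝ) w := by
        simpa using (hasDerivAt_id w).const_sub (a + b)
      have hq : HasDerivAt
          (fun z : ℝ => Real.log (ρ (a + b - z) x₀) + ∫ s' in (0:ℝ)..(a + b - z), Mdiv u s')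
          ((ρt (a + b - w) x₀ / ρ (a + b - w) x₀ + Mdiv u (a + b - w)) * (-1)) w :=
        hψ.comp w haff
      have hq' : (ρt (a + b - w) x₀ / ρ (a + b - w) x₀ + Mdiv u (a + b - w)) * (-1) ≤ 0 := by
        have h1 : -(Mdiv u (a + b - w)) * ρ (a + b - w) x₀ ≤ ρt (a + b - w) x₀ :=
          hkey _ hσm x₀ hminy
        have h2 : -(Mdiv u (a + b - w)) ≤ ρt (a + b - w) x₀ / ρ (a + b - w) x₀ := by
          rw [le_div_iff₀ hρ0]
          exact h1
        nlinarith
      have htend : Filter.Tendsto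
          (slope (fun z : ℝ => Real.log (ρ (a + b - z) x₀) + ∫ s' in (0:ℝ)..(a + b - z), Mdiv u s') w)
          (nhdsWithin w (Ioi w))
          (nhds ((ρt (a + b - w) x₀ / ρ (a + b - w) x₀ + Mdiv u (a + b - w)) * (-1))) :=
        (hasDerivAt_iff_tendsto_slope.mp hq).mono_left
          (nhdsWithin_mono _ fun z hz => Set.mem_compl_singleton_iff.mpr (ne_of_gt hz))
      have hev1 := htend.eventually_lt_const (lt_of_le_of_lt hq' hr)
      have hev2 : ∀ᶠ z in nhdsWithin w (Ioi w), z ∈ Ioc w b :=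
        Ioc_mem_nhdsGT_of_mem ⟨le_rfl, hw.2⟩
      refine ((hev1.and hev2).mono ?_).frequently
      rintro z ⟨h1, h2⟩
      have hzw : (0:ℝ) < z - w := sub_pos.mpr h2.1
      have hsI : a + b - z ∈ Icc (0:ℝ) T :=
        ⟨by linarith [h2.2, hw.1], by linarith [h2.1, hw.1, hw.2]⟩
      have hle1 : sInf (range (ρ (a + b - z))) ≤ ρ (a + b - z) x₀ := hmle _ hsI x₀
      have hsle : Real.log (sInf (range (ρ (a + b - z)))) + (∫ s' in (0:ℝ)..(a + b - z), Mdiv u s')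
          ≤ Real.log (ρ (a + b - z) x₀) + ∫ s' in (0:ℝ)..(a + b - z), Mdiv u s' :=
        add_le_add_left
          ((Real.log_le_log_iff (hmpos _ hsI) (hρpos _ hsI x₀)).mpr hle1) _
      have hfeq : Real.log (sInf (range (ρ (a + b - w)))) + (∫ s' in (0:ℝ)..(a + b - w), Mdiv u s')
          = Real.log (ρ (a + b - w) x₀) + ∫ s' in (0:ℝ)..(a + b - w), Mdiv u s' := by
        rw [hmeq]
      rw [slope_def_field] at h1 ⊢
      rw [hfeq]
      refine lt_of_le_of_lt ?_ h1
      apply div_le_div_of_nonneg_right ?_ hzw.le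
      · exact sub_le_sub_right hsle _
    have hb := key (right_mem_Icc.mpr hab)
    simpa using hb
  -- assemble
  rcases eq_or_lt_of_le ht.1 with h0 | h0
  · rw [← h0]
    simp only [intervalIntegral.integral_same, neg_zero, Real.exp_zero, mul_one]
    exact hmle 0 (left_mem_Icc.mpr hT.le) x
  · have hcontθ : ContinuousOn
        (fun τ => Real.log (sInf (range (ρ τ))) + ∫ s in (0:ℝ)..τ, Mdiv u s) (Icc 0 T) :=
      (hmcont.log fun τ hτ => (hmpos τ hτ).ne').add hPcont
    have hclaim : ∀ a ∈ Ioo (0:ℝ) t,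
        Real.log (sInf (range (ρ a))) + (∫ s in (0:ℝ)..a, Mdiv u s)
          ≤ Real.log (sInf (range (ρ t))) + (∫ s in (0:ℝ)..t, Mdiv u s) := by
      intro a haa
      rcases lt_or_eq_of_le ht.2 with htT | htT
      · exact hθmono a t haa.1 haa.2.le htT
      · subst htT
        have htd : Filter.Tendsto
            (fun τ => Real.log (sInf (range (ρ τ))) + ∫ s in (0:ℝ)..τ, Mdiv u s)
            (nhdsWithin t (Iio t))
            (nhds (Real.log (sInf (range (ρ t))) + ∫ s in (0:ℝ)..t, Mdiv u s)) := by
          have h1 := hcontθ t (right_mem_Icc.mpr hT.le)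
          rw [← nhdsWithin_Ioo_eq_nhdsLT hT]
          exact h1.mono_left (nhdsWithin_mono _ Ioo_subset_Icc_self)
        refine ge_of_tendsto htd ?_
        have hmem : Ioo a t ∈ nhdsWithin t (Iio t) :=
          Ioo_mem_nhdsLT_of_mem ⟨haa.2, le_rfl⟩
        filter_upwards [hmem] with b hb
        exact hθmono a b haa.1 hb.1.le hb.2
    have htd0 : Filter.Tendsto
        (fun τ => Real.log (sInf (range (ρ τ))) + ∫ s in (0:ℝ)..τ, Mdiv u s)
        (nhdsWithin 0 (Ioi 0))
        (nhds (Real.log (sInf (range (ρ 0))) + ∫ s in (0:ℝ)..(0:ℝ), Mdiv u s)) := by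
      have h1 := hcontθ 0 (left_mem_Icc.mpr hT.le)
      rw [← nhdsWithin_Ioo_eq_nhdsGT hT]
      exact h1.mono_left (nhdsWithin_mono _ Ioo_subset_Icc_self)
    have hθ0 : Real.log (sInf (range (ρ 0)))
        ≤ Real.log (sInf (range (ρ t))) + ∫ s in (0:ℝ)..t, Mdiv u s := by
      have hev : ∀ᶠ a in nhdsWithin (0:ℝ) (Ioi 0),
          Real.log (sInf (range (ρ a))) + (∫ s in (0:ℝ)..a, Mdiv u s)
            ≤ Real.log (sInf (range (ρ t))) + (∫ s in (0:ℝ)..t, Mdiv u s) := by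
        filter_upwards [Ioo_mem_nhdsGT_of_mem ⟨le_rfl, h0⟩] with a haa
        exact hclaim a haa
      have h2 := le_of_tendsto htd0 hev
      simpa [intervalIntegral.integral_same] using h2
    have hm0 : 0 < sInf (range (ρ 0)) := hmpos 0 (left_mem_Icc.mpr hT.le)
    have hmt : 0 < sInf (range (ρ t)) := hmpos t ht
    have hexp : sInf (range (ρ 0))
        ≤ sInf (range (ρ t)) * Real.exp (∫ s in (0:ℝ)..t, Mdiv u s) := by
      calc sInf (range (ρ 0)) = Real.exp (Real.log (sInf (range (ρ 0)))) :=
            (Real.exp_log hm0).symm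
        _ ≤ Real.exp (Real.log (sInf (range (ρ t))) + ∫ s in (0:ℝ)..t, Mdiv u s) :=
            Real.exp_le_exp.mpr hθ0
        _ = sInf (range (ρ t)) * Real.exp (∫ s in (0:ℝ)..t, Mdiv u s) := by
            rw [Real.exp_add, Real.exp_log hmt]
    have hfinal : sInf (range (ρ 0)) * Real.exp (-∫ s in (0:ℝ)..t, Mdiv u s)
        ≤ sInf (range (ρ t)) := by
      rw [Real.exp_neg, ← div_eq_mul_inv, div_le_iff₀ (Real.exp_pos _)]
      exact hexp
    exact hfinal.trans (hmle t ht x)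
end

section
/- Let Q ⊆ ℝ³ be a measurable set of finite positive measure and H a finite-dimensional linear subspace of L²(Q;ℝ³) all of whose elements are essentially bounded; let C_H = sup{‖v‖_{L^∞} : v ∈ H, ‖v‖_{L²} ≤ 1}, which is finite. Let Π be the orthogonal projection onto H and M[ρ]v = Π(ρ·v) for ρ ∈ L^∞(Q). If ρ¹, ρ² ∈ L^∞(Q) satisfy ρ¹(x), ρ²(x) ≥ ρ̲ > 0 for a.e. x, then ‖M[ρ¹] − M[ρ²]‖_{L(H)} ≤ C_H²·‖ρ¹ − ρ²‖_{L¹(Q)} and ‖M[ρ¹]^{-1} − M[ρ²]^{-1}‖_{L(H)} ≤ C_H²·ρ̲^{-2}·‖ρ¹ − ρ²‖_{L¹(Q)}, where ‖·‖_{L(H)} is the operator norm induced by the L² norm on H. -/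
open MeasureTheory
open scoped RealInnerProductSpace

/-- `ℝ³` as a Euclidean space. -/
abbrev E3 := EuclideanSpace ℝ (Fin 3)

/-- The Lebesgue measure restricted to `Q ⊆ ℝ³`. -/
noncomputable def muQ (Q : Set E3) : Measure E3 := volume.restrict Q

set_option maxHeartbeats 1000000

private lemma divlem (c x y : ℝ) (hc : 0 < c) (hy : 0 ≤ y) (hx : 0 ≤ x)
    (h : c * x ^ 2 ≤ y * x) : c * x ≤ y := by
  rcases eq_or_lt_of_le hx with h0 | h0
  · rw [← h0, mul_zero]; exact hy
  · exact le_of_mul_le_mul_right (by nlinarith : (c * x) * x ≤ y * x) h0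

/-- **Lipschitz dependence of the mass matrix on the density.**
Let `Q ⊆ ℝ³` have finite positive measure, `H` a finite-dimensional subspace of `L²(Q;ℝ³)`
whose elements are essentially bounded, `C_H` a constant with `‖v‖_∞ ≤ C_H·‖v‖_{L²}` on `H`,
and `M[ρ]v = Π(ρ·v)`. If `ρ¹, ρ² ≥ ρ̲ > 0` a.e. (and are essentially bounded), then
`‖M[ρ¹] - M[ρ²]‖ ≤ C_H²·‖ρ¹-ρ²‖_{L¹}` and
`‖M[ρ¹]⁻¹ - M[ρ²]⁻¹‖ ≤ C_H²·ρ̲⁻²·‖ρ¹-ρ²‖_{L¹}` in the operator norm on `H`. -/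
theorem stmt_17
    (Q : Set E3) (hQm : MeasurableSet Q)
    (hQpos : 0 < volume Q) (hQfin : volume Q < ⊤)
    (H : Submodule ℝ (Lp E3 2 (muQ Q))) [FiniteDimensional ℝ H]
    (hbdd : ∀ v : H, eLpNorm ((↑v : Lp E3 2 (muQ Q)) : E3 → E3) ⊤ (muQ Q) < ⊤)
    (CH : ℝ)
    (hCH : ∀ v : H, (eLpNorm ((↑v : Lp E3 2 (muQ Q)) : E3 → E3) ⊤ (muQ Q)).toReal ≤ CH * ‖v‖)
    (ρ₁ ρ₂ : E3 → ℝ) (ρlo ρhi : ℝ) (hlo : 0 < ρlo)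
    (hb₁ : ∀ᵐ x ∂(muQ Q), ρlo ≤ ρ₁ x ∧ ρ₁ x ≤ ρhi)
    (hb₂ : ∀ᵐ x ∂(muQ Q), ρlo ≤ ρ₂ x ∧ ρ₂ x ≤ ρhi)
    (rmul₁ rmul₂ : Lp E3 2 (muQ Q) → Lp E3 2 (muQ Q))
    (hrmul₁ : ∀ v : Lp E3 2 (muQ Q),
      (rmul₁ v : E3 → E3) =ᵐ[muQ Q] fun x => ρ₁ x • (v : E3 → E3) x)
    (hrmul₂ : ∀ v : Lp E3 2 (muQ Q),
      (rmul₂ v : E3 → E3) =ᵐ[muQ Q] fun x => ρ₂ x • (v : E3 → E3) x) :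
    (∀ v : H,
      ‖Submodule.orthogonalProjectionOnto H (rmul₁ ↑v) - Submodule.orthogonalProjectionOnto H (rmul₂ ↑v)‖
        ≤ CH ^ 2 * (∫ x, |ρ₁ x - ρ₂ x| ∂(muQ Q)) * ‖v‖)
    ∧ (∀ v w₁ w₂ : H,
        Submodule.orthogonalProjectionOnto H (rmul₁ ↑w₁) = v →
        Submodule.orthogonalProjectionOnto H (rmul₂ ↑w₂) = v →
        ‖w₁ - w₂‖ ≤ CH ^ 2 * ρlo⁻¹ ^ 2 * (∫ x, |ρ₁ x - ρ₂ x| ∂(muQ Q)) * ‖v‖) := by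
  haveI : IsFiniteMeasure (muQ Q) := by
    constructor
    rw [muQ, Measure.restrict_apply_univ]
    exact hQfin
  set L : ℝ := ∫ x, |ρ₁ x - ρ₂ x| ∂(muQ Q) with hLdef
  have hL0 : 0 ≤ L := integral_nonneg fun x => abs_nonneg _
  -- a.e. pointwise bound of elements of H by the (finite) ess-sup norm
  have hae : ∀ v : H, ∀ᵐ x ∂(muQ Q),
      ‖((↑v : Lp E3 2 (muQ Q)) : E3 → E3) x‖
        ≤ (eLpNorm ((↑v : Lp E3 2 (muQ Q)) : E3 → E3) ⊤ (muQ Q)).toReal := by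
    intro v
    filter_upwards [ae_le_eLpNormEssSup
      (f := ((↑v : Lp E3 2 (muQ Q)) : E3 → E3)) (μ := muQ Q)] with x hx
    have hne : eLpNormEssSup ((↑v : Lp E3 2 (muQ Q)) : E3 → E3) (muQ Q) ≠ ⊤ := by
      rw [← eLpNorm_exponent_top]; exact (hbdd v).ne
    have := ENNReal.toReal_mono hne hx
    simpa [eLpNorm_exponent_top] using this
  -- nonnegativity of CH * ‖v‖
  have hCH0 : ∀ v : H, 0 ≤ CH * ‖v‖ := fun v =>
    le_trans ENNReal.toReal_nonneg (hCH v)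
  -- measurability of ρᵢ
  have hQμ : muQ Q Q ≠ ⊤ := by
    rw [muQ, Measure.restrict_apply_self]; exact hQfin.ne
  have hmeas : ∀ (ρ : E3 → ℝ) (rmul : Lp E3 2 (muQ Q) → Lp E3 2 (muQ Q)),
      (∀ v : Lp E3 2 (muQ Q),
        (rmul v : E3 → E3) =ᵐ[muQ Q] fun x => ρ x • (v : E3 → E3) x) →
      AEStronglyMeasurable ρ (muQ Q) := by
    intro ρ rmul hr
    set e0 : E3 := EuclideanSpace.single (0 : Fin 3) (1 : ℝ) with he0
    have he0n : ⟪e0, e0⟫ = 1 := by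
      rw [real_inner_self_eq_norm_sq, he0, EuclideanSpace.norm_single]
      norm_num
    set v0 : Lp E3 2 (muQ Q) := indicatorConstLp 2 hQm hQμ e0 with hv0
    have h1 : (v0 : E3 → E3) =ᵐ[muQ Q] fun _ => e0 := by
      have hmem : ∀ᵐ x ∂(muQ Q), x ∈ Q := by
        rw [muQ]; exact ae_restrict_mem hQm
      filter_upwards [indicatorConstLp_coeFn (p := 2) (hs := hQm) (hμs := hQμ) (c := e0),
        hmem] with x hx hxQ
      rw [hx, Set.indicator_of_mem hxQ]
    have h2 : ρ =ᵐ[muQ Q] fun x => ⟪(rmul v0 : E3 → E3) x, e0⟫ := by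
      filter_upwards [hr v0, h1] with x hx h1x
      rw [hx, h1x, real_inner_smul_left, he0n, mul_one]
    exact (((Lp.aestronglyMeasurable (rmul v0)).inner aestronglyMeasurable_const)).congr h2.symm
  have hm₁ := hmeas ρ₁ rmul₁ hrmul₁
  have hm₂ := hmeas ρ₂ rmul₂ hrmul₂
  -- integrability of |ρ₁ - ρ₂|
  have hIabs : Integrable (fun x => |ρ₁ x - ρ₂ x|) (muQ Q) := by
    refine (integrable_const (ρhi - ρlo)).mono' ((hm₁.sub hm₂).norm) ?_
    filter_upwards [hb₁, hb₂] with x hx1 hx2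
    rw [Real.norm_eq_abs, abs_abs]
    have := abs_sub_abs_le_abs_sub (ρ₁ x) (ρ₂ x)
    rw [abs_sub_le_iff]
    constructor <;> [linarith [hx1.1, hx1.2, hx2.1, hx2.2]; linarith [hx1.1, hx1.2, hx2.1, hx2.2]]
  -- key identity
  have key : ∀ (f : Lp E3 2 (muQ Q)) (u : H),
      ⟪Submodule.orthogonalProjectionOnto H (rmul₁ f) - Submodule.orthogonalProjectionOnto H (rmul₂ f), u⟫
        = ∫ x, (ρ₁ x - ρ₂ x) * ⟪(f : E3 → E3) x, ((↑u : Lp E3 2 (muQ Q)) : E3 → E3) x⟫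
            ∂(muQ Q) := by
    intro f u
    rw [inner_sub_left, Submodule.inner_orthogonalProjectionOnto_eq_of_mem_right,
      Submodule.inner_orthogonalProjectionOnto_eq_of_mem_right, L2.inner_def, L2.inner_def,
      ← integral_sub (L2.integrable_inner _ _) (L2.integrable_inner _ _)]
    refine integral_congr_ae ?_
    filter_upwards [hrmul₁ f, hrmul₂ f] with x h1 h2
    rw [h1, h2, real_inner_smul_left, real_inner_smul_left]
    ring
  -- part 1
  have part1 : ∀ v : H,
      ‖Submodule.orthogonalProjectionOnto H (rmul₁ ↑v) - Submodule.orthogonalProjectionOnto H (rmul₂ ↑v)‖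
        ≤ CH ^ 2 * L * ‖v‖ := by
    intro v
    set u : H := Submodule.orthogonalProjectionOnto H (rmul₁ ↑v) - Submodule.orthogonalProjectionOnto H (rmul₂ ↑v) with hu
    have hK0 : 0 ≤ CH ^ 2 * L * ‖v‖ := by positivity
    have h1 : ‖u‖ ^ 2
        = ∫ x, (ρ₁ x - ρ₂ x)
            * ⟪((↑v : Lp E3 2 (muQ Q)) : E3 → E3) x,
                ((↑u : Lp E3 2 (muQ Q)) : E3 → E3) x⟫ ∂(muQ Q) := by
      rw [← key (↑v) u, hu, real_inner_self_eq_norm_sq]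
    -- integrability of the LHS integrand
    have hIf : Integrable (fun x => (ρ₁ x - ρ₂ x)
        * ⟪((↑v : Lp E3 2 (muQ Q)) : E3 → E3) x,
            ((↑u : Lp E3 2 (muQ Q)) : E3 → E3) x⟫) (muQ Q) := by
      refine (((L2.integrable_inner (𝕜 := ℝ) (rmul₁ ↑v) ↑u).sub
        (L2.integrable_inner (𝕜 := ℝ) (rmul₂ ↑v) ↑u))).congr ?_
      filter_upwards [hrmul₁ ↑v, hrmul₂ ↑v] with x hx1 hx2
      simp only [Pi.sub_apply]
      rw [hx1, hx2, real_inner_smul_left, real_inner_smul_left]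
      ring
    have h2 : ‖u‖ ^ 2 ≤ L * ((CH * ‖v‖) * (CH * ‖u‖)) := by
      rw [h1, ← integral_mul_const]
      refine integral_mono_ae hIf (hIabs.mul_const _) ?_
      filter_upwards [hae v, hae u] with x hxv hxu
      calc (ρ₁ x - ρ₂ x) * ⟪_, _⟫
          ≤ |(ρ₁ x - ρ₂ x) * ⟪((↑v : Lp E3 2 (muQ Q)) : E3 → E3) x,
                ((↑u : Lp E3 2 (muQ Q)) : E3 → E3) x⟫| := le_abs_self _
        _ = |ρ₁ x - ρ₂ x| * |⟪((↑v : Lp E3 2 (muQ Q)) : E3 → E3) x,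
                ((↑u : Lp E3 2 (muQ Q)) : E3 → E3) x⟫| := abs_mul _ _
        _ ≤ |ρ₁ x - ρ₂ x| * ((CH * ‖v‖) * (CH * ‖u‖)) := by
            refine mul_le_mul_of_nonneg_left ?_ (abs_nonneg _)
            calc |⟪_, _⟫| ≤ ‖((↑v : Lp E3 2 (muQ Q)) : E3 → E3) x‖
                  * ‖((↑u : Lp E3 2 (muQ Q)) : E3 → E3) x‖ := abs_real_inner_le_norm _ _
              _ ≤ (CH * ‖v‖) * (CH * ‖u‖) := by
                  refine mul_le_mul (hxv.trans (hCH v)) (hxu.trans (hCH u))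
                    (norm_nonneg _) (hCH0 v)
    have h3 : 1 * ‖u‖ ^ 2 ≤ (CH ^ 2 * L * ‖v‖) * ‖u‖ := by
      rw [one_mul]; nlinarith [h2]
    have := divlem 1 ‖u‖ (CH ^ 2 * L * ‖v‖) one_pos hK0 (norm_nonneg _) h3
    linarith
  refine ⟨part1, ?_⟩
  -- coercivity
  have coerc : ∀ (ρ : E3 → ℝ) (rmul : Lp E3 2 (muQ Q) → Lp E3 2 (muQ Q)),
      (∀ v : Lp E3 2 (muQ Q),
        (rmul v : E3 → E3) =ᵐ[muQ Q] fun x => ρ x • (v : E3 → E3) x) →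
      (∀ᵐ x ∂(muQ Q), ρlo ≤ ρ x) →
      ∀ w : H, ρlo * ‖w‖ ^ 2 ≤ ⟪Submodule.orthogonalProjectionOnto H (rmul ↑w), w⟫ := by
    intro ρ rmul hr hblo w
    rw [Submodule.inner_orthogonalProjectionOnto_eq_of_mem_right, L2.inner_def]
    have hIρ : Integrable (fun x => ρ x
        * ⟪((↑w : Lp E3 2 (muQ Q)) : E3 → E3) x,
            ((↑w : Lp E3 2 (muQ Q)) : E3 → E3) x⟫) (muQ Q) := by
      refine (L2.integrable_inner (𝕜 := ℝ) (rmul ↑w) ↑w).congr ?_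
      filter_upwards [hr ↑w] with x hx
      rw [hx, real_inner_smul_left]
    have heq : (∫ x, ⟪(rmul ↑w : E3 → E3) x,
        ((↑w : Lp E3 2 (muQ Q)) : E3 → E3) x⟫ ∂(muQ Q))
        = ∫ x, ρ x * ⟪((↑w : Lp E3 2 (muQ Q)) : E3 → E3) x,
            ((↑w : Lp E3 2 (muQ Q)) : E3 → E3) x⟫ ∂(muQ Q) := by
      refine integral_congr_ae ?_
      filter_upwards [hr ↑w] with x hx
      rw [hx, real_inner_smul_left]
    rw [heq]
    have hnorm : ρlo * ‖w‖ ^ 2 = ∫ x, ρlo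
        * ⟪((↑w : Lp E3 2 (muQ Q)) : E3 → E3) x,
            ((↑w : Lp E3 2 (muQ Q)) : E3 → E3) x⟫ ∂(muQ Q) := by
      rw [integral_const_mul]
      congr 1
      rw [← L2.inner_def, ← real_inner_self_eq_norm_sq]
      rfl
    rw [hnorm]
    refine integral_mono_ae ((L2.integrable_inner (𝕜 := ℝ) (↑w : Lp E3 2 (muQ Q)) ↑w).const_mul _) hIρ ?_
    filter_upwards [hblo] with x hx
    exact mul_le_mul_of_nonneg_right hx real_inner_self_nonneg
  -- splitting
  have split : ∀ (ρ : E3 → ℝ) (rmul : Lp E3 2 (muQ Q) → Lp E3 2 (muQ Q)),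
      (∀ v : Lp E3 2 (muQ Q),
        (rmul v : E3 → E3) =ᵐ[muQ Q] fun x => ρ x • (v : E3 → E3) x) →
      ∀ (a b z : H),
      ⟪Submodule.orthogonalProjectionOnto H (rmul ↑(a - b)), z⟫
        = ⟪Submodule.orthogonalProjectionOnto H (rmul ↑a), z⟫ - ⟪Submodule.orthogonalProjectionOnto H (rmul ↑b), z⟫ := by
    intro ρ rmul hr a b z
    rw [Submodule.inner_orthogonalProjectionOnto_eq_of_mem_right,
      Submodule.inner_orthogonalProjectionOnto_eq_of_mem_right,
      Submodule.inner_orthogonalProjectionOnto_eq_of_mem_right, L2.inner_def, L2.inner_def, L2.inner_def,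
      ← integral_sub (L2.integrable_inner _ _) (L2.integrable_inner _ _)]
    refine integral_congr_ae ?_
    have hab : (↑(a - b) : Lp E3 2 (muQ Q)) = ↑a - ↑b := rfl
    filter_upwards [hr ↑(a - b), hr ↑a, hr ↑b,
      Lp.coeFn_sub (↑a : Lp E3 2 (muQ Q)) ↑b] with x h1 h2 h3 h4
    rw [h1, h2, h3, hab, h4]
    simp only [Pi.sub_apply]
    simp [smul_sub, inner_sub_left, real_inner_smul_left]
  -- part 2
  intro v w₁ w₂ hw₁ hw₂
  set u : H := w₁ - w₂ with hu
  have hw1b : ρlo * ‖w₁‖ ≤ ‖v‖ := by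
    refine divlem ρlo ‖w₁‖ ‖v‖ hlo (norm_nonneg _) (norm_nonneg _) ?_
    have h := coerc ρ₁ rmul₁ hrmul₁ (hb₁.mono fun x hx => hx.1) w₁
    rw [hw₁] at h
    calc ρlo * ‖w₁‖ ^ 2 ≤ ⟪v, w₁⟫ := h
      _ ≤ ‖v‖ * ‖w₁‖ := real_inner_le_norm _ _
  have hub : ρlo * ‖u‖ ≤ CH ^ 2 * L * ‖w₁‖ := by
    refine divlem ρlo ‖u‖ (CH ^ 2 * L * ‖w₁‖) hlo (by positivity) (norm_nonneg _) ?_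
    have h1 := coerc ρ₂ rmul₂ hrmul₂ (hb₂.mono fun x hx => hx.1) u
    have h2 := split ρ₂ rmul₂ hrmul₂ w₁ w₂ u
    rw [hu] at h1
    rw [h2, hw₂, ← hw₁] at h1
    have h3 : ⟪Submodule.orthogonalProjectionOnto H (rmul₂ ↑w₁), u⟫
        - ⟪Submodule.orthogonalProjectionOnto H (rmul₁ ↑w₁), u⟫
        = -⟪Submodule.orthogonalProjectionOnto H (rmul₁ ↑w₁) - Submodule.orthogonalProjectionOnto H (rmul₂ ↑w₁), u⟫ := by
      rw [inner_sub_left]; ring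
    rw [h3] at h1
    calc ρlo * ‖u‖ ^ 2 ≤ _ := h1
      _ ≤ ‖Submodule.orthogonalProjectionOnto H (rmul₁ ↑w₁) - Submodule.orthogonalProjectionOnto H (rmul₂ ↑w₁)‖ * ‖u‖ := by
          calc -⟪Submodule.orthogonalProjectionOnto H (rmul₁ ↑w₁) - Submodule.orthogonalProjectionOnto H (rmul₂ ↑w₁), u⟫
              ≤ |⟪Submodule.orthogonalProjectionOnto H (rmul₁ ↑w₁) - Submodule.orthogonalProjectionOnto H (rmul₂ ↑w₁), u⟫| :=
                neg_le_abs _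
            _ ≤ _ := abs_real_inner_le_norm _ _
      _ ≤ (CH ^ 2 * L * ‖w₁‖) * ‖u‖ :=
          mul_le_mul_of_nonneg_right (part1 w₁) (norm_nonneg _)
  have hq : ρlo ^ 2 * ‖u‖ ≤ CH ^ 2 * L * ‖v‖ := by
    have h1 : ρlo * (ρlo * ‖u‖) ≤ ρlo * (CH ^ 2 * L * ‖w₁‖) :=
      mul_le_mul_of_nonneg_left hub hlo.le
    have h2 : CH ^ 2 * L * (ρlo * ‖w₁‖) ≤ CH ^ 2 * L * ‖v‖ :=
      mul_le_mul_of_nonneg_left hw1b (by positivity)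
    nlinarith
  have hinv : (0 : ℝ) < ρlo⁻¹ ^ 2 := by positivity
  calc ‖u‖ = ρlo⁻¹ ^ 2 * (ρlo ^ 2 * ‖u‖) := by field_simp
    _ ≤ ρlo⁻¹ ^ 2 * (CH ^ 2 * L * ‖v‖) := mul_le_mul_of_nonneg_left hq hinv.le
    _ = CH ^ 2 * ρlo⁻¹ ^ 2 * L * ‖v‖ := by ring
end

section
/- Let Q ⊂ ℝ³ be a bounded open set and μ̲ > 0. There exists a constant c > 0, depending only on Q, with the following property: for every v ∈ C_c^∞(Q;ℝ³), every measurable θ : Q → (0,∞), and all functions μ, η : (0,∞) → ℝ with μ(z) ≥ μ̲·(1+z) and η(z) ≥ 0 for all z > 0, one has ∫_Q (|v|² + |∇v|²) dx ≤ (c/μ̲) · ∫_Q (1/θ(x)) · S(θ(x), ∇v(x)) : ∇v(x) dx, where S(z,A) = μ(z)·(A + Aᵀ − (2/3)·tr(A)·I) + η(z)·tr(A)·I and B : C denotes the Frobenius inner product of 3×3 matrices. -/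
open MeasureTheory Matrix
open scoped ENNReal NNReal

/-- The Jacobian matrix `(∇v)_{ij} = ∂_j v_i` of a vector field on `ℝ³`. -/
noncomputable def gradMat (v : (Fin 3 → ℝ) → Fin 3 → ℝ) (x : Fin 3 → ℝ) :
    Matrix (Fin 3) (Fin 3) ℝ :=
  Matrix.of fun i j => pd (fun y => v y i) j x

/-- Frobenius inner product of two `3×3` real matrices. -/
noncomputable def frob (B C : Matrix (Fin 3) (Fin 3) ℝ) : ℝ := ∑ i, ∑ j, B i j * C i j

/-- Newtonian viscous stress `S = μ·(A + Aᵀ - (2/3)·tr(A)·I) + η·tr(A)·I`. -/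
noncomputable def newtonStress (μ η : ℝ) (A : Matrix (Fin 3) (Fin 3) ℝ) :
    Matrix (Fin 3) (Fin 3) ℝ :=
  μ • (A + Aᵀ - ((2:ℝ)/3) • A.trace • (1 : Matrix (Fin 3) (Fin 3) ℝ))
    + η • A.trace • (1 : Matrix (Fin 3) (Fin 3) ℝ)

/-- deviatoric symmetric gradient -/
noncomputable def devsym (A : Matrix (Fin 3) (Fin 3) ℝ) : Matrix (Fin 3) (Fin 3) ℝ :=
  A + Aᵀ - ((2:ℝ)/3) • A.trace • (1 : Matrix (Fin 3) (Fin 3) ℝ)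

lemma frob_newton_eq (m e : ℝ) (A : Matrix (Fin 3) (Fin 3) ℝ) :
    frob (newtonStress m e A) A = m * (frob (devsym A) (devsym A) / 2) + e * A.trace ^ 2 := by
  simp only [frob, newtonStress, devsym, Matrix.trace, Matrix.diag, Fin.sum_univ_three,
    Matrix.add_apply, Matrix.sub_apply, Matrix.smul_apply, Matrix.one_apply,
    Matrix.transpose_apply, smul_eq_mul, Matrix.of_apply]
  norm_num [Fin.ext_iff]
  ring

lemma frob_self_nonneg (A : Matrix (Fin 3) (Fin 3) ℝ) : 0 ≤ frob A A := by
  refine Finset.sum_nonneg fun i _ => Finset.sum_nonneg fun j _ => ?_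
  exact mul_self_nonneg _

lemma frob_devsym_eq (A : Matrix (Fin 3) (Fin 3) ℝ) :
    frob (devsym A) (devsym A)
      = 2 * (∑ i, ∑ j, A i j ^ 2) + 2 * (∑ i, ∑ j, A i j * A j i) - (4/3) * A.trace ^ 2 := by
  simp only [frob, devsym, Matrix.trace, Matrix.diag, Fin.sum_univ_three,
    Matrix.add_apply, Matrix.sub_apply, Matrix.smul_apply, Matrix.one_apply,
    Matrix.transpose_apply, smul_eq_mul]
  norm_num [Fin.ext_iff]
  ring

section calc_aux

variable {f g : (Fin 3 → ℝ) → ℝ}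

lemma contDiff_pd (hf : ContDiff ℝ (⊤ : ℕ∞) f) (j : Fin 3) : ContDiff ℝ (⊤ : ℕ∞) (pd f j) := by
  have h1 : ContDiff ℝ (⊤ : ℕ∞) (fderiv ℝ f) := hf.fderiv_right (by simp)
  exact (ContinuousLinearMap.apply ℝ ℝ (Pi.single j 1 : Fin 3 → ℝ)).contDiff.comp h1

lemma support_pd (f : (Fin 3 → ℝ) → ℝ) (j : Fin 3) :
    Function.support (pd f j) ⊆ tsupport f := by
  intro x hx
  by_contra h
  have : fderiv ℝ f x = 0 := by
    have := support_fderiv_subset (𝕜 := ℝ) (f := f)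
    by_contra h2
    exact h (this h2)
  simp [pd, this] at hx

lemma hcs_pd (hf : HasCompactSupport f) (j : Fin 3) : HasCompactSupport (pd f j) :=
  hf.mono' (support_pd f j)

/-- second partials commute for smooth functions -/
lemma pd_pd_comm (hf : ContDiff ℝ (⊤ : ℕ∞) f) (i j : Fin 3) (x : Fin 3 → ℝ) :
    pd (pd f i) j x = pd (pd f j) i x := by
  have hdf : ContDiff ℝ (⊤ : ℕ∞) (fderiv ℝ f) := hf.fderiv_right (by simp)
  have hdiff : ∀ w : Fin 3 → ℝ, DifferentiableAt ℝ (fderiv ℝ f) w :=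
    fun w => hdf.differentiable (by simp) w
  have h1 : ∀ (k l : Fin 3),
      pd (pd f k) l x = fderiv ℝ (fderiv ℝ f) x (Pi.single l 1) (Pi.single k 1) := by
    intro k l
    have : pd f k = fun y => (fderiv ℝ f y) (Pi.single k 1) := rfl
    rw [pd, this, fderiv_clm_apply (hdiff x) (differentiableAt_const _)]
    simp
  rw [h1, h1]
  exact second_derivative_symmetric (fun y => (hf.differentiable (by simp) y).hasFDerivAt)
    (hdiff x).hasFDerivAt _ _

lemma ibp_step (hf : ContDiff ℝ (⊤ : ℕ∞) f) (hg : ContDiff ℝ (⊤ : ℕ∞) g)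
    (hfs : HasCompactSupport f) (k l : Fin 3) :
    ∫ x, pd f k x * pd g l x = - ∫ x, f x * pd (pd g l) k x := by
  have hgl : ContDiff ℝ (⊤ : ℕ∞) (pd g l) := contDiff_pd hg l
  have h1 : Integrable (fun x => fderiv ℝ f x (Pi.single k 1) * pd g l x) volume :=
    ((contDiff_pd hf k).continuous.mul hgl.continuous).integrable_of_hasCompactSupport
      ((hcs_pd hfs k).mul_right)
  have h2 : Integrable (fun x => f x * fderiv ℝ (pd g l) x (Pi.single k 1)) volume :=
    (hf.continuous.mul (contDiff_pd hgl k).continuous).integrable_of_hasCompactSupport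
      (hfs.mul_right)
  have h3 : Integrable (fun x => f x * pd g l x) volume :=
    (hf.continuous.mul hgl.continuous).integrable_of_hasCompactSupport (hfs.mul_right)
  have h : (∫ x, f x * pd (pd g l) k x) = -∫ x, pd f k x * pd g l x :=
    integral_mul_fderiv_eq_neg_fderiv_mul_of_integrable (μ := volume) (g := pd g l)
      h1 h2 h3 (fun x _ => hf.differentiable (by simp) x) (fun x _ => hgl.differentiable (by simp) x)
  linarith [h]

/-- integration by parts swap -/
lemma ibp_swap (hf : ContDiff ℝ (⊤ : ℕ∞) f) (hg : ContDiff ℝ (⊤ : ℕ∞) g)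
    (hfs : HasCompactSupport f) (hgs : HasCompactSupport g) (i j : Fin 3) :
    ∫ x, pd f j x * pd g i x = ∫ x, pd f i x * pd g j x := by
  rw [ibp_step hf hg hfs j i, ibp_step hf hg hfs i j]
  congr 1
  apply integral_congr_ae
  filter_upwards with x
  rw [pd_pd_comm hg i j]

end calc_aux

section korn

variable {v : (Fin 3 → ℝ) → Fin 3 → ℝ}

lemma contDiff_comp (hv : ContDiff ℝ (⊤ : ℕ∞) v) (i : Fin 3) : ContDiff ℝ (⊤ : ℕ∞) (fun y => v y i) :=
  (ContinuousLinearMap.proj (R := ℝ) (φ := fun _ : Fin 3 => ℝ) i).contDiff.comp hv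

lemma hcs_comp (hvs : HasCompactSupport v) (i : Fin 3) :
    HasCompactSupport (fun y => v y i) :=
  hvs.comp_left (g := fun w : Fin 3 → ℝ => w i) rfl

lemma korn (hv : ContDiff ℝ (⊤ : ℕ∞) v) (hvs : HasCompactSupport v) :
    2 * ∫ x, (∑ i, ∑ j, pd (fun y => v y i) j x ^ 2)
      ≤ ∫ x, frob (devsym (gradMat v x)) (devsym (gradMat v x)) := by
  set a : Fin 3 → Fin 3 → (Fin 3 → ℝ) → ℝ := fun i j => pd (fun y => v y i) j with ha
  have hsm : ∀ i j, ContDiff ℝ (⊤ : ℕ∞) (a i j) := fun i j => contDiff_pd (contDiff_comp hv i) j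
  have hcs : ∀ i j, HasCompactSupport (a i j) := fun i j => hcs_pd (hcs_comp hvs i) j
  have hint : ∀ i j k l, Integrable (fun x => a i j x * a k l x) volume := fun i j k l =>
    ((hsm i j).continuous.mul (hsm k l).continuous).integrable_of_hasCompactSupport
      ((hcs i j).mul_right)
  have hints : Integrable (fun x => ∑ i, ∑ j, a i j x ^ 2) volume := by
    apply integrable_finset_sum _ fun i _ => integrable_finset_sum _ fun j _ => ?_
    simpa [pow_two] using hint i j i j
  have hintc : Integrable (fun x => ∑ i, ∑ j, a i j x * a j i x) volume :=
    integrable_finset_sum _ fun i _ => integrable_finset_sum _ fun j _ => hint i j j i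
  have hintt : Integrable (fun x => (∑ i, a i i x) ^ 2) volume := by
    have : (fun x => (∑ i, a i i x) ^ 2) = fun x => ∑ i, ∑ j, a i i x * a j j x := by
      funext x; rw [pow_two, Finset.sum_mul_sum]
    rw [this]
    exact integrable_finset_sum _ fun i _ => integrable_finset_sum _ fun j _ => hint i i j j
  have key : ∀ i j, ∫ x, a i j x * a j i x = ∫ x, a i i x * a j j x := fun i j =>
    ibp_swap (contDiff_comp hv i) (contDiff_comp hv j) (hcs_comp hvs i) (hcs_comp hvs j) i j
  have hc_eq : ∫ x, ∑ i, ∑ j, a i j x * a j i x = ∫ x, (∑ i, a i i x) ^ 2 := by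
    rw [integral_finset_sum _ fun i _ =>
      integrable_finset_sum _ fun j _ => hint i j j i]
    simp_rw [integral_finset_sum _ fun j _ => hint _ j _ _]
    calc ∑ i, ∑ j, ∫ x, a i j x * a j i x = ∑ i, ∑ j, ∫ x, a i i x * a j j x := by
          exact Finset.sum_congr rfl fun i _ => Finset.sum_congr rfl fun j _ => key i j
      _ = ∫ x, ∑ i, ∑ j, a i i x * a j j x := by
          rw [integral_finset_sum _ fun i _ => integrable_finset_sum _ fun j _ => hint i i j j]
          simp_rw [integral_finset_sum _ fun j _ => hint _ _ _ j]
      _ = ∫ x, (∑ i, a i i x) ^ 2 := by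
          congr 1; funext x; rw [pow_two, Finset.sum_mul_sum]
  have hfrob_eq : ∫ x, frob (devsym (gradMat v x)) (devsym (gradMat v x))
      = 2 * (∫ x, ∑ i, ∑ j, a i j x ^ 2) + 2 * (∫ x, ∑ i, ∑ j, a i j x * a j i x)
        - (4/3) * ∫ x, (∑ i, a i i x) ^ 2 := by
    have e1 : (fun x => frob (devsym (gradMat v x)) (devsym (gradMat v x)))
        = fun x => (2 * (∑ i, ∑ j, a i j x ^ 2) + 2 * (∑ i, ∑ j, a i j x * a j i x))
          - (4/3) * (∑ i, a i i x) ^ 2 := by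
      funext x
      rw [frob_devsym_eq]
      simp [gradMat, Matrix.trace, Matrix.diag, ha]
    have i1 : Integrable (fun x => 2 * (∑ i, ∑ j, a i j x ^ 2)) volume := hints.const_mul 2
    have i2 : Integrable (fun x => 2 * (∑ i, ∑ j, a i j x * a j i x)) volume := hintc.const_mul 2
    have i3 : Integrable (fun x => (4/3 : ℝ) * (∑ i, a i i x) ^ 2) volume := hintt.const_mul (4/3)
    have hadd : Integrable (fun x => 2 * (∑ i, ∑ j, a i j x ^ 2)
        + 2 * (∑ i, ∑ j, a i j x * a j i x)) volume := i1.add i2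
    rw [e1, integral_sub hadd i3, integral_add i1 i2,
      integral_const_mul, integral_const_mul, integral_const_mul]
  have htnn : 0 ≤ ∫ x, (∑ i, a i i x) ^ 2 :=
    integral_nonneg fun x => sq_nonneg _
  rw [hfrob_eq, hc_eq]
  linarith

end korn

section poincare

open ENNReal

lemma opnorm_sq_le (L : (Fin 3 → ℝ) →L[ℝ] (Fin 3 → ℝ)) :
    ‖L‖ ^ 2 ≤ 9 * ∑ i, ∑ j, (L (Pi.single j 1) i) ^ 2 := by
  have hb : ∀ j : Fin 3, ‖L (Pi.single j 1)‖ ^ 2 ≤ ∑ i, (L (Pi.single j 1) i) ^ 2 := by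
    intro j
    set u := L (Pi.single j 1)
    have h1 : ‖u‖ ≤ Real.sqrt (∑ i, u i ^ 2) := by
      rw [pi_norm_le_iff_of_nonneg (Real.sqrt_nonneg _)]
      intro i
      rw [show ‖u i‖ = Real.sqrt ((u i) ^ 2) by rw [Real.sqrt_sq_eq_abs]; rfl]
      apply Real.sqrt_le_sqrt
      exact Finset.single_le_sum (f := fun i => u i ^ 2) (fun i _ => sq_nonneg _)
        (Finset.mem_univ i)
    calc ‖u‖ ^ 2 ≤ Real.sqrt (∑ i, u i ^ 2) ^ 2 := by
          apply pow_le_pow_left₀ (norm_nonneg _) h1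
      _ = ∑ i, u i ^ 2 := Real.sq_sqrt (Finset.sum_nonneg fun i _ => sq_nonneg _)
  have hL : ‖L‖ ≤ ∑ j, ‖L (Pi.single j 1)‖ := by
    apply ContinuousLinearMap.opNorm_le_bound _
      (Finset.sum_nonneg fun j _ => norm_nonneg _)
    intro w
    have hw : w = ∑ j : Fin 3, w j • (Pi.single j 1 : Fin 3 → ℝ) := by
      funext k
      simp [Finset.sum_apply, Pi.single_apply, Finset.sum_ite_eq']
    calc ‖L w‖ = ‖∑ j : Fin 3, w j • L (Pi.single j 1)‖ := by
          conv_lhs => rw [hw]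
          rw [map_sum]
          simp
      _ ≤ ∑ j : Fin 3, ‖w j • L (Pi.single j 1)‖ := norm_sum_le _ _
      _ ≤ ∑ j : Fin 3, ‖L (Pi.single j 1)‖ * ‖w‖ := by
          apply Finset.sum_le_sum
          intro j _
          rw [norm_smul]
          calc ‖w j‖ * ‖L (Pi.single j 1)‖ ≤ ‖w‖ * ‖L (Pi.single j 1)‖ := by
                apply mul_le_mul_of_nonneg_right (norm_le_pi_norm w j) (norm_nonneg _)
            _ = ‖L (Pi.single j 1)‖ * ‖w‖ := mul_comm _ _
      _ = (∑ j, ‖L (Pi.single j 1)‖) * ‖w‖ := by rw [Finset.sum_mul]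
  have h2 : ‖L‖ ^ 2 ≤ (∑ j, ‖L (Pi.single j 1)‖) ^ 2 :=
    pow_le_pow_left₀ (norm_nonneg _) hL 2
  have h3 : (∑ j : Fin 3, ‖L (Pi.single j 1)‖) ^ 2
      ≤ 3 * ∑ j : Fin 3, ‖L (Pi.single j 1)‖ ^ 2 := by
    rw [Fin.sum_univ_three, Fin.sum_univ_three]
    nlinarith [sq_nonneg (‖L (Pi.single (0:Fin 3) 1)‖ - ‖L (Pi.single (1:Fin 3) 1)‖),
      sq_nonneg (‖L (Pi.single (0:Fin 3) 1)‖ - ‖L (Pi.single (2:Fin 3) 1)‖),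
      sq_nonneg (‖L (Pi.single (1:Fin 3) 1)‖ - ‖L (Pi.single (2:Fin 3) 1)‖)]
  have h4 : ∑ j : Fin 3, ‖L (Pi.single j 1)‖ ^ 2 ≤ ∑ j : Fin 3, ∑ i, (L (Pi.single j 1) i) ^ 2 :=
    Finset.sum_le_sum fun j _ => hb j
  have h5 : ∑ j : Fin 3, ∑ i, (L (Pi.single j 1) i) ^ 2
      = ∑ i, ∑ j, (L (Pi.single j 1) i) ^ 2 := Finset.sum_comm
  have h6 : (0:ℝ) ≤ ∑ i : Fin 3, ∑ j : Fin 3, (L (Pi.single j 1) i) ^ 2 :=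
    Finset.sum_nonneg fun i _ => Finset.sum_nonneg fun j _ => sq_nonneg _
  linarith

end poincare

section poincare2
open scoped ENNReal NNReal

lemma pd_eq_fderiv {v : (Fin 3 → ℝ) → Fin 3 → ℝ} (hv : ContDiff ℝ (⊤ : ℕ∞) v)
    (i j : Fin 3) (x : Fin 3 → ℝ) :
    pd (fun y => v y i) j x = fderiv ℝ v x (Pi.single j 1) i := by
  have h0 := (ContinuousLinearMap.proj (R := ℝ) (φ := fun _ : Fin 3 => ℝ) i).hasFDerivAt.comp
    x (hv.differentiable (by simp) x).hasFDerivAt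
  have h : HasFDerivAt (fun y => v y i)
      ((ContinuousLinearMap.proj (R := ℝ) (φ := fun _ : Fin 3 => ℝ) i).comp (fderiv ℝ v x)) x := h0
  rw [pd, h.fderiv]
  rfl

lemma poincare (Q : Set (Fin 3 → ℝ)) (hQb : Bornology.IsBounded Q) :
    ∃ K : ℝ, 0 ≤ K ∧ ∀ v : (Fin 3 → ℝ) → Fin 3 → ℝ, ContDiff ℝ (⊤ : ℕ∞) v → HasCompactSupport v →
      tsupport v ⊆ Q →
      ∫⁻ x, ENNReal.ofReal (∑ i, v x i ^ 2)
        ≤ ENNReal.ofReal K * ∫⁻ x, ENNReal.ofReal (∑ i, ∑ j, pd (fun y => v y i) j x ^ 2) := by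
  set C : ℝ≥0 := eLpNormLESNormFDerivOfLeConst (Fin 3 → ℝ) volume Q 2 2 with hC
  refine ⟨27 * (C:ℝ)^2, by positivity, ?_⟩
  intro v hv hvs hsupp
  have hfin : (2 : ℝ≥0) < Module.finrank ℝ (Fin 3 → ℝ) := by
    rw [Module.finrank_fin_fun]
    norm_num
  have h0 := eLpNorm_le_eLpNorm_fderiv (F := Fin 3 → ℝ) volume (hv.of_le (by simp))
    ((subset_tsupport v).trans hsupp) (by norm_num : (1:ℝ≥0) ≤ 2) hfin hQb
  rw [← hC] at h0
  set Sv : ℝ≥0∞ := ∫⁻ x, (‖v x‖₊ : ℝ≥0∞) ^ 2 with hSv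
  set Sd : ℝ≥0∞ := ∫⁻ x, (‖fderiv ℝ v x‖₊ : ℝ≥0∞) ^ 2 with hSd
  have convpow : ∀ (a : ℝ≥0∞), a ^ ((2:ℝ≥0∞).toReal) = a ^ 2 := by
    intro a
    rw [ENNReal.toReal_ofNat, ← ENNReal.rpow_natCast a 2]
    norm_num
  have e1 : eLpNorm v (2:ℝ≥0) volume = Sv ^ (1/2 : ℝ) := by
    rw [eLpNorm_eq_lintegral_rpow_enorm_toReal (by norm_num) (by norm_num), hSv]
    congr 1
    exact lintegral_congr fun x => by rw [← convpow]; norm_num; rfl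
  have e2 : eLpNorm (fderiv ℝ v) (2:ℝ≥0) volume = Sd ^ (1/2 : ℝ) := by
    rw [eLpNorm_eq_lintegral_rpow_enorm_toReal (by norm_num) (by norm_num), hSd]
    congr 1
    exact lintegral_congr fun x => by rw [← convpow]; norm_num; rfl
  rw [e1, e2] at h0
  have hsq : Sv ≤ (C : ℝ≥0∞) ^ 2 * Sd := by
    have h1 : (Sv ^ (1/2:ℝ)) ^ (2:ℝ) ≤ ((C : ℝ≥0∞) * Sd ^ (1/2:ℝ)) ^ (2:ℝ) :=
      ENNReal.rpow_le_rpow h0 (by norm_num)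
    rw [← ENNReal.rpow_mul, ENNReal.mul_rpow_of_nonneg _ _ (by norm_num : (0:ℝ) ≤ 2),
      ← ENNReal.rpow_mul] at h1
    norm_num at h1
    exact h1
  have hleft : ∫⁻ x, ENNReal.ofReal (∑ i, v x i ^ 2) ≤ 3 * Sv := by
    rw [hSv, ← lintegral_const_mul' _ _ (by norm_num : (3:ℝ≥0∞) ≠ ⊤)]
    apply lintegral_mono
    intro x
    have hr : ∑ i, v x i ^ 2 ≤ 3 * ‖v x‖ ^ 2 := by
      have hh : ∀ i : Fin 3, v x i ^ 2 ≤ ‖v x‖ ^ 2 := by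
        intro i
        rw [← sq_abs (v x i)]
        exact pow_le_pow_left₀ (abs_nonneg _) (norm_le_pi_norm (v x) i) 2
      calc ∑ i, v x i ^ 2 ≤ ∑ _i : Fin 3, ‖v x‖ ^ 2 := Finset.sum_le_sum fun i _ => hh i
        _ = 3 * ‖v x‖ ^ 2 := by rw [Finset.sum_const]; simp
    calc ENNReal.ofReal (∑ i, v x i ^ 2) ≤ ENNReal.ofReal (3 * ‖v x‖ ^ 2) :=
          ENNReal.ofReal_le_ofReal hr
      _ = 3 * (‖v x‖₊ : ℝ≥0∞) ^ 2 := by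
          rw [ENNReal.ofReal_mul (by norm_num), ENNReal.ofReal_pow (norm_nonneg _),
            ofReal_norm, enorm_eq_nnnorm]
          norm_num
  have hright : Sd ≤ 9 * ∫⁻ x, ENNReal.ofReal (∑ i, ∑ j, pd (fun y => v y i) j x ^ 2) := by
    rw [← lintegral_const_mul' _ _ (by norm_num : (9:ℝ≥0∞) ≠ ⊤), hSd]
    apply lintegral_mono
    intro x
    have hb := opnorm_sq_le (fderiv ℝ v x)
    have he : ∑ i, ∑ j, (fderiv ℝ v x (Pi.single j 1) i) ^ 2
        = ∑ i, ∑ j, pd (fun y => v y i) j x ^ 2 := by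
      refine Finset.sum_congr rfl fun i _ => Finset.sum_congr rfl fun j _ => ?_
      rw [pd_eq_fderiv hv]
    rw [he] at hb
    calc (‖fderiv ℝ v x‖₊ : ℝ≥0∞) ^ 2
        = ENNReal.ofReal (‖fderiv ℝ v x‖ ^ 2) := by
          rw [ENNReal.ofReal_pow (norm_nonneg _), ofReal_norm, enorm_eq_nnnorm]
      _ ≤ ENNReal.ofReal (9 * ∑ i, ∑ j, pd (fun y => v y i) j x ^ 2) :=
          ENNReal.ofReal_le_ofReal hb
      _ = 9 * ENNReal.ofReal (∑ i, ∑ j, pd (fun y => v y i) j x ^ 2) := by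
          rw [ENNReal.ofReal_mul (by norm_num)]
          norm_num
  calc ∫⁻ x, ENNReal.ofReal (∑ i, v x i ^ 2) ≤ 3 * Sv := hleft
    _ ≤ 3 * ((C : ℝ≥0∞) ^ 2 * Sd) := by gcongr
    _ ≤ 3 * ((C : ℝ≥0∞) ^ 2 *
        (9 * ∫⁻ x, ENNReal.ofReal (∑ i, ∑ j, pd (fun y => v y i) j x ^ 2))) := by gcongr
    _ = ENNReal.ofReal (27 * (C:ℝ)^2) *
        ∫⁻ x, ENNReal.ofReal (∑ i, ∑ j, pd (fun y => v y i) j x ^ 2) := by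
        rw [ENNReal.ofReal_mul (by norm_num), ENNReal.ofReal_pow C.coe_nonneg,
          ENNReal.ofReal_coe_nnreal]
        norm_num
        ring

end poincare2

section main

open scoped ENNReal NNReal

lemma stress_pointwise {μlo t m e : ℝ} (hμlo : 0 < μlo) (ht : 0 < t)
    (hm : μlo * (1 + t) ≤ m) (he : 0 ≤ e) (A : Matrix (Fin 3) (Fin 3) ℝ) :
    μlo / 2 * frob (devsym A) (devsym A) ≤ (1 / t) * frob (newtonStress m e A) A := by
  rw [frob_newton_eq]
  set D := frob (devsym A) (devsym A) with hD
  have hDnn : 0 ≤ D := frob_self_nonneg _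
  have h2 : 0 ≤ e * A.trace ^ 2 := mul_nonneg he (sq_nonneg _)
  have key : μlo / 2 * D * t ≤ m * (D / 2) + e * A.trace ^ 2 := by nlinarith
  calc μlo / 2 * D = (1 / t) * (μlo / 2 * D * t) := by field_simp
    _ ≤ (1 / t) * (m * (D / 2) + e * A.trace ^ 2) :=
        mul_le_mul_of_nonneg_left key (by positivity)

variable {v : (Fin 3 → ℝ) → Fin 3 → ℝ}

lemma integrable_dd (hv : ContDiff ℝ (⊤ : ℕ∞) v) (hvs : HasCompactSupport v) :
    Integrable (fun x => frob (devsym (gradMat v x)) (devsym (gradMat v x))) volume := by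
  set a : Fin 3 → Fin 3 → (Fin 3 → ℝ) → ℝ := fun i j => pd (fun y => v y i) j with ha
  have hsm : ∀ i j, ContDiff ℝ (⊤ : ℕ∞) (a i j) := fun i j => contDiff_pd (contDiff_comp hv i) j
  have hcs : ∀ i j, HasCompactSupport (a i j) := fun i j => hcs_pd (hcs_comp hvs i) j
  have hint : ∀ i j k l, Integrable (fun x => a i j x * a k l x) volume := fun i j k l =>
    ((hsm i j).continuous.mul (hsm k l).continuous).integrable_of_hasCompactSupport
      ((hcs i j).mul_right)
  have hints : Integrable (fun x => ∑ i, ∑ j, a i j x ^ 2) volume := by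
    apply integrable_finset_sum _ fun i _ => integrable_finset_sum _ fun j _ => ?_
    simpa [pow_two] using hint i j i j
  have hintc : Integrable (fun x => ∑ i, ∑ j, a i j x * a j i x) volume :=
    integrable_finset_sum _ fun i _ => integrable_finset_sum _ fun j _ => hint i j j i
  have hintt : Integrable (fun x => (∑ i, a i i x) ^ 2) volume := by
    have h : (fun x => (∑ i, a i i x) ^ 2) = fun x => ∑ i, ∑ j, a i i x * a j j x := by
      funext x; rw [pow_two, Finset.sum_mul_sum]
    rw [h]
    exact integrable_finset_sum _ fun i _ => integrable_finset_sum _ fun j _ => hint i i j j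
  have e1 : (fun x => frob (devsym (gradMat v x)) (devsym (gradMat v x)))
      = fun x => (2 * (∑ i, ∑ j, a i j x ^ 2) + 2 * (∑ i, ∑ j, a i j x * a j i x))
        - (4/3) * (∑ i, a i i x) ^ 2 := by
    funext x
    rw [frob_devsym_eq]
    simp [gradMat, Matrix.trace, Matrix.diag, ha]
  rw [e1]
  exact ((hints.const_mul 2).add (hintc.const_mul 2)).sub (hintt.const_mul (4/3))

lemma continuous_dd (hv : ContDiff ℝ (⊤ : ℕ∞) v) :
    Continuous (fun x => frob (devsym (gradMat v x)) (devsym (gradMat v x))) := by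
  have hsm : ∀ i j : Fin 3, Continuous (pd (fun y => v y i) j) := fun i j =>
    (contDiff_pd (contDiff_comp hv i) j).continuous
  simp only [frob, devsym, Matrix.trace, Matrix.diag, Matrix.add_apply, Matrix.sub_apply,
    Matrix.smul_apply, Matrix.one_apply, Matrix.transpose_apply, smul_eq_mul, gradMat,
    Matrix.of_apply]
  fun_prop

lemma pd_zero_outside (hsupp : tsupport v ⊆ Q) {x : Fin 3 → ℝ} (hx : x ∉ Q) (i j : Fin 3) :
    pd (fun y => v y i) j x = 0 := by
  have h1 : tsupport (fun y => v y i) ⊆ tsupport v := by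
    apply closure_mono
    intro y hy
    simp only [Function.mem_support] at hy ⊢
    intro h
    exact hy (by rw [h]; rfl)
  have h2 : Function.support (pd (fun y => v y i) j) ⊆ Q :=
    (support_pd _ j).trans (h1.trans hsupp)
  by_contra h
  exact hx (h2 h)

end main

/-- **Korn–Poincaré inequality with temperature-dependent viscosity.**
For a bounded open set `Q ⊂ ℝ³` there is a constant `c > 0` depending only on `Q` such
that for every `μ̲ > 0`, every `v ∈ C_c^∞(Q;ℝ³)`, every `θ : Q → (0,∞)` and all viscosity
coefficients with `μ(z) ≥ μ̲·(1+z)`, `η(z) ≥ 0`, one has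
`∫_Q (|v|² + |∇v|²) ≤ (c/μ̲)·∫_Q (1/θ)·S(θ,∇v):∇v`. -/
theorem stmt_19 (Q : Set (Fin 3 → ℝ)) (hQo : IsOpen Q) (hQb : Bornology.IsBounded Q) :
    ∃ c : ℝ, 0 < c ∧
      ∀ μlo : ℝ, 0 < μlo →
      ∀ v : (Fin 3 → ℝ) → Fin 3 → ℝ,
        ContDiff ℝ (⊤ : ℕ∞) v → HasCompactSupport v → tsupport v ⊆ Q →
      ∀ θ : (Fin 3 → ℝ) → ℝ, (∀ x, 0 < θ x) →
      ∀ μ η : ℝ → ℝ,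
        (∀ z : ℝ, 0 < z → μlo * (1 + z) ≤ μ z) → (∀ z : ℝ, 0 < z → 0 ≤ η z) →
        (∫⁻ x in Q, ENNReal.ofReal
            ((∑ i, v x i ^ 2) + ∑ i, ∑ j, pd (fun y => v y i) j x ^ 2))
          ≤ ENNReal.ofReal (c / μlo) *
            ∫⁻ x in Q, ENNReal.ofReal ((1 / θ x) *
              frob (newtonStress (μ (θ x)) (η (θ x)) (gradMat v x)) (gradMat v x)) := by
  
  obtain ⟨K, hK0, hP⟩ := poincare Q hQb
  refine ⟨K + 1, by positivity, ?_⟩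
  intro μlo hμlo v hv hvs hsupp θ hθ μ η hμ hη
  set a : Fin 3 → Fin 3 → (Fin 3 → ℝ) → ℝ := fun i j => pd (fun y => v y i) j with ha
  set dd : (Fin 3 → ℝ) → ℝ :=
    fun x => frob (devsym (gradMat v x)) (devsym (gradMat v x)) with hdd
  set J : ℝ≥0∞ := ∫⁻ x, ENNReal.ofReal (∑ i, ∑ j, a i j x ^ 2) with hJ
  set T : ℝ≥0∞ := ∫⁻ x, ENNReal.ofReal (dd x) with hT
  have hvzero : ∀ x ∉ Q, v x = 0 := fun x hx =>
    image_eq_zero_of_notMem_tsupport (fun h => hx (hsupp h))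
  have hazero : ∀ x ∉ Q, ∀ i j, a i j x = 0 := fun x hx i j => pd_zero_outside hsupp hx i j
  have hddzero : ∀ x ∉ Q, dd x = 0 := by
    intro x hx
    have hg : gradMat v x = 0 := by
      ext i j
      exact hazero x hx i j
    rw [hdd]
    simp [hg, devsym, frob]
  -- continuity / measurability
  have hc1 : Continuous (fun x => ∑ i, v x i ^ 2) :=
    continuous_finset_sum _ fun i _ => ((contDiff_comp hv i).continuous.pow 2)
  have hc2 : Continuous (fun x => ∑ i, ∑ j, a i j x ^ 2) :=
    continuous_finset_sum _ fun i _ => continuous_finset_sum _ fun j _ =>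
      ((contDiff_pd (contDiff_comp hv i) j).continuous.pow 2)
  -- integrability for Korn transfer
  have hints : Integrable (fun x => ∑ i, ∑ j, a i j x ^ 2) volume := by
    apply integrable_finset_sum _ fun i _ => integrable_finset_sum _ fun j _ => ?_
    have h : Integrable (fun x => a i j x * a i j x) volume :=
      ((contDiff_pd (contDiff_comp hv i) j).continuous.mul
        (contDiff_pd (contDiff_comp hv i) j).continuous).integrable_of_hasCompactSupport
        ((hcs_pd (hcs_comp hvs i) j).mul_right)
    simpa [pow_two] using h
  -- LHS over Q equals LHS over univ; split
  have hLHS : (∫⁻ x in Q, ENNReal.ofReal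
        ((∑ i, v x i ^ 2) + ∑ i, ∑ j, pd (fun y => v y i) j x ^ 2))
      = (∫⁻ x, ENNReal.ofReal (∑ i, v x i ^ 2)) + J := by
    rw [setLIntegral_eq_of_support_subset]
    · rw [hJ, ← lintegral_add_left (hc1.measurable.ennreal_ofReal)]
      apply lintegral_congr
      intro x
      rw [← ENNReal.ofReal_add (Finset.sum_nonneg fun i _ => sq_nonneg _)
        (Finset.sum_nonneg fun i _ => Finset.sum_nonneg fun j _ => sq_nonneg _)]
    · intro x hx
      by_contra hxQ
      apply hx
      simp only [Function.mem_support, ne_eq, not_not] at *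
      have h1 : ∑ i, v x i ^ 2 = 0 := by
        apply Finset.sum_eq_zero
        intro i _
        rw [hvzero x hxQ]
        simp
      have h2 : ∑ i, ∑ j, pd (fun y => v y i) j x ^ 2 = 0 := by
        apply Finset.sum_eq_zero fun i _ => Finset.sum_eq_zero fun j _ => ?_
        rw [show pd (fun y => v y i) j x = a i j x from rfl, hazero x hxQ]
        simp
      rw [h1, h2]
      simp
  -- Korn transfer
  have hddnn : ∀ x, 0 ≤ dd x := fun x => frob_self_nonneg _
  have hJ_eq : J = ENNReal.ofReal (∫ x, ∑ i, ∑ j, a i j x ^ 2) :=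
    (ofReal_integral_eq_lintegral_ofReal hints
      (Filter.Eventually.of_forall fun x =>
        Finset.sum_nonneg fun i _ => Finset.sum_nonneg fun j _ => sq_nonneg _)).symm
  have hT_eq : T = ENNReal.ofReal (∫ x, dd x) :=
    (ofReal_integral_eq_lintegral_ofReal (integrable_dd hv hvs)
      (Filter.Eventually.of_forall hddnn)).symm
  have hKorn := korn hv hvs
  have hJT : J ≤ ENNReal.ofReal (1/2) * T := by
    rw [hJ_eq, hT_eq, ← ENNReal.ofReal_mul (by norm_num)]
    apply ENNReal.ofReal_le_ofReal
    rw [hdd]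
    rw [ha]
    linarith [hKorn]
  -- Poincaré
  have hPb := hP v hv hvs hsupp
  -- RHS lower bound
  have hRHS : ENNReal.ofReal (μlo/2) * T
      ≤ ∫⁻ x in Q, ENNReal.ofReal ((1 / θ x) *
          frob (newtonStress (μ (θ x)) (η (θ x)) (gradMat v x)) (gradMat v x)) := by
    have step1 : ENNReal.ofReal (μlo/2) * T = ∫⁻ x, ENNReal.ofReal (μlo/2 * dd x) := by
      rw [hT, ← lintegral_const_mul' _ _ (by simp : ENNReal.ofReal (μlo/2) ≠ ⊤)]
      apply lintegral_congr
      intro x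
      rw [ENNReal.ofReal_mul (by positivity)]
    have step2 : (∫⁻ x, ENNReal.ofReal (μlo/2 * dd x))
        = ∫⁻ x in Q, ENNReal.ofReal (μlo/2 * dd x) := by
      rw [setLIntegral_eq_of_support_subset]
      intro x hx
      by_contra hxQ
      apply hx
      simp only [Function.mem_support, ne_eq, not_not] at *
      rw [hddzero x hxQ]
      simp
    rw [step1, step2]
    apply lintegral_mono
    intro x
    apply ENNReal.ofReal_le_ofReal
    exact stress_pointwise hμlo (hθ x) (hμ _ (hθ x)) (hη _ (hθ x)) _
  -- assemble
  calc (∫⁻ x in Q, ENNReal.ofReal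
        ((∑ i, v x i ^ 2) + ∑ i, ∑ j, pd (fun y => v y i) j x ^ 2))
      = (∫⁻ x, ENNReal.ofReal (∑ i, v x i ^ 2)) + J := hLHS
    _ ≤ ENNReal.ofReal K * J + J := by gcongr
    _ = ENNReal.ofReal (K + 1) * J := by
        rw [ENNReal.ofReal_add hK0 zero_le_one, ENNReal.ofReal_one, add_mul, one_mul]
    _ ≤ ENNReal.ofReal (K + 1) * (ENNReal.ofReal (1/2) * T) := by gcongr
    _ = ENNReal.ofReal ((K + 1) / μlo) * (ENNReal.ofReal (μlo/2) * T) := by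
        rw [← mul_assoc, ← mul_assoc, ← ENNReal.ofReal_mul (by positivity),
          ← ENNReal.ofReal_mul (by positivity)]
        congr 2
        field_simp
    _ ≤ ENNReal.ofReal ((K + 1) / μlo) *
        ∫⁻ x in Q, ENNReal.ofReal ((1 / θ x) *
          frob (newtonStress (μ (θ x)) (η (θ x)) (gradMat v x)) (gradMat v x)) := by
        gcongr
end
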